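/- arXiv:2410.03292 — 8 statements merged into one kernel-verified Lean document; each statement's English description precedes it below -/
import Mathlib

section
/- The function h(r) = 2·ln(1 + e^{−r}) − r·e^{−r}/(1 + e^{−r}) has a unique positive root r₀, and h(r) < 0 for all r > r₀. -/
noncomputable def Fh (r : ℝ) : ℝ :=
  2 * (1 + Real.exp r) * Real.log (1 + Real.exp (-r)) - r

lemma Fh_hasDerivAt (x : ℝ) :
    HasDerivAt Fh (2 * Real.exp x * Real.log (1 + Real.exp (-x)) +
      2 * (1 + Real.exp x) * (Real.exp (-x) * (-1) / (1 + Real.exp (-x))) - 1) x := by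
  have h1 : HasDerivAt (fun r : ℝ => 1 + Real.exp (-r)) (Real.exp (-x) * (-1)) x :=
    ((hasDerivAt_neg x).exp).const_add 1
  have hL : HasDerivAt (fun r : ℝ => Real.log (1 + Real.exp (-r)))
      (Real.exp (-x) * (-1) / (1 + Real.exp (-x))) x :=
    h1.log (by positivity)
  have hg : HasDerivAt (fun r : ℝ => 2 * (1 + Real.exp r)) (2 * Real.exp x) x :=
    ((Real.hasDerivAt_exp x).const_add 1).const_mul 2
  have h2 := (hg.mul hL).sub (hasDerivAt_id x)
  exact h2

lemma exp_mul_exp_neg (x : ℝ) : Real.exp x * Real.exp (-x) = 1 := by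
  rw [← Real.exp_add]; simp

lemma Fh_deriv_neg (x : ℝ) : deriv Fh x < 0 := by
  rw [(Fh_hasDerivAt x).deriv]
  have hp : (0:ℝ) < 1 + Real.exp (-x) := by positivity
  have hxx := exp_mul_exp_neg x
  have hlog_le : Real.log (1 + Real.exp (-x)) ≤ Real.exp (-x) := by
    have := Real.log_le_sub_one_of_pos hp
    linarith
  have hterm : 2 * (1 + Real.exp x) * (Real.exp (-x) * (-1) / (1 + Real.exp (-x))) = -2 := by
    field_simp
    nlinarith [hxx]
  rw [hterm]
  have hb : Real.exp x * Real.log (1 + Real.exp (-x)) ≤ 1 := by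
    calc Real.exp x * Real.log (1 + Real.exp (-x)) ≤ Real.exp x * Real.exp (-x) :=
      mul_le_mul_of_nonneg_left hlog_le (Real.exp_pos x).le
    _ = 1 := hxx
  linarith

lemma Fh_strictAnti : StrictAnti Fh := strictAnti_of_deriv_neg Fh_deriv_neg

lemma h_eq_sigma_mul (r : ℝ) :
    2 * Real.log (1 + Real.exp (-r)) - r * Real.exp (-r) / (1 + Real.exp (-r)) =
      Real.exp (-r) / (1 + Real.exp (-r)) * Fh r := by
  have hp : (0:ℝ) < 1 + Real.exp (-r) := by positivity
  have hxx := exp_mul_exp_neg r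
  unfold Fh
  field_simp
  linear_combination (-2) * Real.log (1 + Real.exp (-r)) * hxx

lemma Fh_zero_pos : 0 < Fh 0 := by
  unfold Fh
  simp only [Real.exp_zero, neg_zero]
  have : (0:ℝ) < Real.log 2 := Real.log_pos (by norm_num)
  norm_num
  linarith

lemma Fh_five_neg : Fh 5 < 0 := by
  unfold Fh
  have hp : (0:ℝ) < 1 + Real.exp (-5) := by positivity
  have hlog_le : Real.log (1 + Real.exp (-5:ℝ)) ≤ Real.exp (-5:ℝ) := by
    have := Real.log_le_sub_one_of_pos hp
    linarith
  have hxx := exp_mul_exp_neg (5:ℝ)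
  have h1 : Real.exp (-5:ℝ) < 1 := by
    have := Real.exp_lt_one_iff.mpr (by norm_num : (-5:ℝ) < 0)
    exact this
  have hpos : (0:ℝ) < Real.exp (5:ℝ) := Real.exp_pos _
  have hb := mul_le_mul_of_nonneg_left hlog_le
    (by positivity : (0:ℝ) ≤ 2 * (1 + Real.exp 5))
  nlinarith [hb, hxx, h1, Real.exp_pos (-5:ℝ)]

/-- The function `h(r) = 2·ln(1+e^{−r}) − r·e^{−r}/(1+e^{−r})` has a unique positive
root `r₀`, and `h(r) < 0` for all `r > r₀`. -/
theorem stmt4 :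
    ∃ r₀ : ℝ, (0 < r₀ ∧
        2 * Real.log (1 + Real.exp (-r₀)) -
          r₀ * Real.exp (-r₀) / (1 + Real.exp (-r₀)) = 0) ∧
      (∀ r : ℝ, 0 < r →
        2 * Real.log (1 + Real.exp (-r)) -
          r * Real.exp (-r) / (1 + Real.exp (-r)) = 0 → r = r₀) ∧
      (∀ r : ℝ, r₀ < r →
        2 * Real.log (1 + Real.exp (-r)) -
          r * Real.exp (-r) / (1 + Real.exp (-r)) < 0) := by
  have hcont : Continuous Fh :=
    Differentiable.continuous (fun x => (Fh_hasDerivAt x).differentiableAt)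
  have hsub : Set.Ioo (Fh 5) (Fh 0) ⊆ Fh '' Set.Ioo 0 5 :=
    intermediate_value_Ioo' (by norm_num) hcont.continuousOn
  obtain ⟨r₀, hr₀mem, hr₀⟩ := hsub ⟨Fh_five_neg, Fh_zero_pos⟩
  have hr₀pos : 0 < r₀ := hr₀mem.1
  refine ⟨r₀, ⟨hr₀pos, ?_⟩, ?_, ?_⟩
  · rw [h_eq_sigma_mul, hr₀]
    ring
  · intro r _ hr
    rw [h_eq_sigma_mul] at hr
    have hσ : Real.exp (-r) / (1 + Real.exp (-r)) ≠ 0 := by positivity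
    have hFr : Fh r = 0 := by
      rcases mul_eq_zero.mp hr with h | h
      · exact absurd h hσ
      · exact h
    exact Fh_strictAnti.injective (hFr.trans hr₀.symm)
  · intro r hr
    rw [h_eq_sigma_mul]
    have hFr : Fh r < 0 := by
      have := Fh_strictAnti hr
      rw [hr₀] at this
      exact this
    have hσ : 0 < Real.exp (-r) / (1 + Real.exp (-r)) := by positivity
    exact mul_neg_of_pos_of_neg hσ hFr
end

section
/- Consider the scalar Mamba dynamics x₁'(t) = μ·x₁(t)³·Δ(x₁(t)) with Δ(u) = ln(1+e^{S_Δ u}), μ = S_C^⊤S_B < 0, and x₁(0) = x₁₀ > 0. Then x₁(t) is positive, strictly decreasing, defined on [0,∞), and x₁(t) = O(1/√t) as t → ∞. -/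
/-- Convergence scenario for the first token: for the scalar Mamba dynamics
`x₁' = μ·x₁³·Δ(x₁)` with `Δ(u) = ln(1+e^{S_Δ u})`, `μ < 0` and `x₁(0) = x₁₀ > 0`,
the solution (on a maximal interval `[0,T)`) is globally defined, positive, strictly
decreasing, and `x₁(t) = O(1/√t)`. -/
theorem stmt9 (μ SΔ x₁₀ : ℝ) (hμ : μ < 0) (hx₀ : 0 < x₁₀)
    (T : EReal) (hT : 0 < T) (x : ℝ → ℝ) (hinit : x 0 = x₁₀)
    (hode : ∀ t : ℝ, 0 ≤ t → (t : EReal) < T →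
      HasDerivAt x (μ * x t ^ 3 * Real.log (1 + Real.exp (SΔ * x t))) t)
    (hmax : T ≠ ⊤ → ¬ ∃ M : ℝ, ∀ t : ℝ, 0 ≤ t → (t : EReal) < T → |x t| ≤ M) :
    T = ⊤ ∧ (∀ t : ℝ, 0 ≤ t → 0 < x t) ∧ StrictAntiOn x (Set.Ici 0) ∧
      ∃ C : ℝ, 0 < C ∧ ∀ t : ℝ, 1 ≤ t → x t ≤ C / Real.sqrt t := by
  have hΔpos : ∀ u : ℝ, 0 < Real.log (1 + Real.exp (SΔ * u)) := fun u =>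
    Real.log_pos (by linarith [Real.exp_pos (SΔ * u)])
  set K := Real.log (1 + Real.exp (|SΔ| * x₁₀)) with hKdef
  set δ := Real.log (1 + Real.exp (-(|SΔ| * x₁₀))) with hδdef
  have hK : 0 < K := Real.log_pos (by linarith [Real.exp_pos (|SΔ| * x₁₀)])
  have hδ : 0 < δ := Real.log_pos (by linarith [Real.exp_pos (-(|SΔ| * x₁₀))])
  have hΔle : ∀ u : ℝ, 0 ≤ u → u ≤ x₁₀ → Real.log (1 + Real.exp (SΔ * u)) ≤ K := by
    intro u hu hux
    apply Real.log_le_log (by positivity)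
    have h1 : SΔ * u ≤ |SΔ| * x₁₀ := by
      nlinarith [le_abs_self SΔ, abs_nonneg SΔ]
    linarith [Real.exp_le_exp.2 h1]
  have hΔge : ∀ u : ℝ, 0 ≤ u → u ≤ x₁₀ → δ ≤ Real.log (1 + Real.exp (SΔ * u)) := by
    intro u hu hux
    apply Real.log_le_log (by positivity)
    have h1 : -(|SΔ| * x₁₀) ≤ SΔ * u := by
      nlinarith [neg_abs_le SΔ, abs_nonneg SΔ]
    linarith [Real.exp_le_exp.2 h1]
  set L := -2 * μ * K with hLdef
  have hL : 0 < L := by nlinarith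
  set A : ℝ → ℝ := fun t => x₁₀⁻¹ ^ 2 + 1 + L * t with hAdef
  have hApos : ∀ t : ℝ, 0 ≤ t → 0 < A t := by
    intro t ht
    have : 0 ≤ L * t := mul_nonneg hL.le ht
    have h2 : 0 ≤ x₁₀⁻¹ ^ 2 := sq_nonneg _
    simp only [hAdef]
    linarith
  have hAcont : Continuous A := by
    simp only [hAdef]; continuity
  -- derivative of y = (x²)⁻¹
  have hyD : ∀ τ : ℝ, 0 ≤ τ → (τ : EReal) < T → 0 < x τ →
      HasDerivAt (fun t => (x t ^ 2)⁻¹)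
        (-2 * μ * Real.log (1 + Real.exp (SΔ * x τ))) τ := by
    intro τ h0 hτT hx
    have hd := hode τ h0 hτT
    have h1 := hd.fun_pow 2
    have h2 := h1.fun_inv (by positivity : x τ ^ 2 ≠ 0)
    refine h2.congr_deriv ?_
    have hxne : x τ ≠ 0 := ne_of_gt hx
    field_simp
    ring
  -- Key lower-bound/positivity lemma
  have key : ∀ T' : ℝ, 0 ≤ T' → (T' : EReal) < T → ∀ t ∈ Set.Icc (0:ℝ) T',
      (Real.sqrt (A t))⁻¹ < x t := by
    intro T' hT'0 hT'T
    by_contra hcon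
    push_neg at hcon
    obtain ⟨t₁, ht₁, hxt₁⟩ := hcon
    have hmem : ∀ t ∈ Set.Icc (0:ℝ) T', (0:ℝ) ≤ t ∧ (t : EReal) < T := by
      intro t ht
      exact ⟨ht.1, lt_of_le_of_lt (EReal.coe_le_coe_iff.2 ht.2) hT'T⟩
    have hD : ∀ t ∈ Set.Icc (0:ℝ) T',
        HasDerivAt x (μ * x t ^ 3 * Real.log (1 + Real.exp (SΔ * x t))) t :=
      fun t ht => hode t (hmem t ht).1 (hmem t ht).2
    have hcont : ContinuousOn x (Set.Icc 0 T') :=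
      fun t ht => ((hD t ht).continuousAt).continuousWithinAt
    have hbcont : ContinuousOn (fun t : ℝ => (Real.sqrt (A t))⁻¹) (Set.Icc 0 T') := by
      apply ContinuousOn.inv₀ (Real.continuous_sqrt.comp hAcont).continuousOn
      intro t ht
      exact ne_of_gt (Real.sqrt_pos.2 (hApos t ht.1))
    set S := {t ∈ Set.Icc (0:ℝ) T' | x t ≤ (Real.sqrt (A t))⁻¹} with hSdef
    have hSclosed : IsClosed S := by
      have hEq : S = Set.Icc (0:ℝ) T' ∩
          (fun t => x t - (Real.sqrt (A t))⁻¹) ⁻¹' Set.Iic 0 := by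
        ext t
        simp only [hSdef, Set.mem_setOf_eq, Set.mem_inter_iff, Set.mem_preimage,
          Set.mem_Iic, sub_nonpos]
      rw [hEq]
      exact (hcont.sub hbcont).preimage_isClosed_of_isClosed isClosed_Icc isClosed_Iic
    have hSne : S.Nonempty := ⟨t₁, ht₁, hxt₁⟩
    have hSbdd : BddBelow S := ⟨0, fun t ht => ht.1.1⟩
    set t₀ := sInf S with ht₀def
    have ht₀S : t₀ ∈ S := hSclosed.csInf_mem hSne hSbdd
    obtain ⟨ht₀Icc, hxt₀⟩ := ht₀S
    have hb0 : (Real.sqrt (A 0))⁻¹ < x 0 := by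
      rw [hinit]
      have h1 : A 0 = x₁₀⁻¹ ^ 2 + 1 := by simp [hAdef]
      have h2 : Real.sqrt (x₁₀⁻¹ ^ 2) < Real.sqrt (A 0) := by
        rw [h1]; exact Real.sqrt_lt_sqrt (by positivity) (by linarith)
      rw [Real.sqrt_sq (by positivity)] at h2
      have h3 : 0 < x₁₀⁻¹ := by positivity
      have h4 := inv_strictAnti₀ h3 h2
      rwa [inv_inv] at h4
    have ht₀pos : 0 < t₀ := by
      rcases ht₀Icc.1.lt_or_eq with h | h
      · exact h
      · exfalso; rw [← h] at hxt₀; exact absurd hxt₀ (not_le.2 hb0)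
    have hIccsub : Set.Icc (0:ℝ) t₀ ⊆ Set.Icc 0 T' := Set.Icc_subset_Icc le_rfl ht₀Icc.2
    have hgt : ∀ τ ∈ Set.Ico (0:ℝ) t₀, (Real.sqrt (A τ))⁻¹ < x τ := by
      intro τ hτ
      by_contra h
      push_neg at h
      have hτS : τ ∈ S := ⟨⟨hτ.1, hτ.2.le.trans ht₀Icc.2⟩, h⟩
      exact absurd (csInf_le hSbdd hτS) (not_le.2 hτ.2)
    have hxt₀ge : (Real.sqrt (A t₀))⁻¹ ≤ x t₀ := by
      have hc : ContinuousAt (fun t => x t - (Real.sqrt (A t))⁻¹) t₀ := by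
        apply ContinuousAt.sub (hD t₀ ht₀Icc).continuousAt
        exact ((Real.continuous_sqrt.comp hAcont).continuousAt).inv₀
          (ne_of_gt (Real.sqrt_pos.2 (hApos t₀ ht₀Icc.1)))
      have hlim : Filter.Tendsto (fun t => x t - (Real.sqrt (A t))⁻¹) (nhdsWithin t₀ (Set.Iio t₀))
          (nhds (x t₀ - (Real.sqrt (A t₀))⁻¹)) := hc.continuousWithinAt
      have hev : ∀ᶠ τ in nhdsWithin t₀ (Set.Iio t₀), 0 ≤ x τ - (Real.sqrt (A τ))⁻¹ := by
        filter_upwards [Ioo_mem_nhdsLT_of_mem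
          (show t₀ ∈ Set.Ioc (0:ℝ) t₀ from ⟨ht₀pos, le_rfl⟩)] with τ hτ
        exact sub_nonneg.2 (hgt τ ⟨hτ.1.le, hτ.2⟩).le
      have := ge_of_tendsto hlim hev
      linarith
    have hxpos : ∀ τ ∈ Set.Icc (0:ℝ) t₀, 0 < x τ := by
      intro τ hτ
      have hbpos : 0 < (Real.sqrt (A τ))⁻¹ := inv_pos.2 (Real.sqrt_pos.2 (hApos τ hτ.1))
      rcases hτ.2.lt_or_eq with h | h
      · exact lt_trans hbpos (hgt τ ⟨hτ.1, h⟩)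
      · rw [h]; rw [h] at hbpos; exact lt_of_lt_of_le hbpos hxt₀ge
    have hanti : StrictAntiOn x (Set.Icc 0 t₀) := by
      apply strictAntiOn_of_deriv_neg (convex_Icc 0 t₀) (hcont.mono hIccsub)
      intro τ hτ
      rw [interior_Icc] at hτ
      have hτ' : τ ∈ Set.Icc (0:ℝ) t₀ := Set.Ioo_subset_Icc_self hτ
      rw [(hD τ (hIccsub hτ')).deriv]
      have h1 := hxpos τ hτ'
      have h2 := hΔpos (x τ)
      exact mul_neg_of_neg_of_pos (mul_neg_of_neg_of_pos hμ (pow_pos h1 3)) h2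
    have hxle : ∀ τ ∈ Set.Icc (0:ℝ) t₀, x τ ≤ x₁₀ := by
      intro τ hτ
      rcases hτ.1.lt_or_eq with h | h
      · have := hanti ⟨le_rfl, ht₀pos.le⟩ hτ h
        rw [hinit] at this; linarith
      · rw [← h, hinit]
    have hybound : (x t₀ ^ 2)⁻¹ - (x 0 ^ 2)⁻¹ ≤ L * t₀ := by
      have hmvt := Convex.norm_image_sub_le_of_norm_hasDerivWithin_le
        (f := fun t => (x t ^ 2)⁻¹)
        (f' := fun τ => -2 * μ * Real.log (1 + Real.exp (SΔ * x τ)))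
        (s := Set.Icc 0 t₀) (C := L)
        (fun τ hτ => (hyD τ (hmem τ (hIccsub hτ)).1 (hmem τ (hIccsub hτ)).2
          (hxpos τ hτ)).hasDerivWithinAt)
        (fun τ hτ => by
          show ‖-2 * μ * Real.log (1 + Real.exp (SΔ * x τ))‖ ≤ L
          have h1 := hΔpos (x τ)
          have h2 := hΔle (x τ) (hxpos τ hτ).le (hxle τ hτ)
          have hμ2 : (0:ℝ) ≤ -2 * μ := by linarith
          rw [Real.norm_eq_abs,
            abs_of_nonneg (mul_nonneg hμ2 h1.le)]
          rw [hLdef]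
          nlinarith [mul_nonneg hμ2 (sub_nonneg.2 h2)])
        (convex_Icc 0 t₀) ⟨le_rfl, ht₀pos.le⟩ ⟨ht₀pos.le, le_rfl⟩
      rw [Real.norm_eq_abs, Real.norm_eq_abs, sub_zero, abs_of_nonneg ht₀pos.le] at hmvt
      calc (x t₀ ^ 2)⁻¹ - (x 0 ^ 2)⁻¹ ≤ |(x t₀ ^ 2)⁻¹ - (x 0 ^ 2)⁻¹| := le_abs_self _
        _ ≤ L * t₀ := hmvt
    have hy0 : (x 0 ^ 2)⁻¹ = x₁₀⁻¹ ^ 2 := by rw [hinit, ← inv_pow]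
    have hyt₀ : (x t₀ ^ 2)⁻¹ = A t₀ := by
      have hx : x t₀ = (Real.sqrt (A t₀))⁻¹ := le_antisymm hxt₀ hxt₀ge
      rw [hx, ← inv_pow, inv_inv, Real.sq_sqrt (hApos t₀ ht₀Icc.1).le]
    rw [hy0, hyt₀] at hybound
    simp only [hAdef] at hybound
    linarith
  -- positivity on any admissible interval
  have hpos' : ∀ T' : ℝ, 0 ≤ T' → (T' : EReal) < T → ∀ t ∈ Set.Icc (0:ℝ) T', 0 < x t :=
    fun T' h1 h2 t ht =>
      lt_trans (inv_pos.2 (Real.sqrt_pos.2 (hApos t ht.1))) (key T' h1 h2 t ht)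
  have hbounds : ∀ T' : ℝ, 0 ≤ T' → (T' : EReal) < T → ∀ t ∈ Set.Icc (0:ℝ) T', x t ≤ x₁₀ := by
    intro T' h1 h2 t ht
    have hmem : ∀ s ∈ Set.Icc (0:ℝ) T', (0:ℝ) ≤ s ∧ (s : EReal) < T := by
      intro s hs
      exact ⟨hs.1, lt_of_le_of_lt (EReal.coe_le_coe_iff.2 hs.2) h2⟩
    have hD : ∀ s ∈ Set.Icc (0:ℝ) T',
        HasDerivAt x (μ * x s ^ 3 * Real.log (1 + Real.exp (SΔ * x s))) s :=
      fun s hs => hode s (hmem s hs).1 (hmem s hs).2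
    have hcont : ContinuousOn x (Set.Icc 0 T') :=
      fun s hs => ((hD s hs).continuousAt).continuousWithinAt
    have hanti : StrictAntiOn x (Set.Icc 0 T') := by
      apply strictAntiOn_of_deriv_neg (convex_Icc 0 T') hcont
      intro s hs
      rw [interior_Icc] at hs
      have hs' : s ∈ Set.Icc (0:ℝ) T' := Set.Ioo_subset_Icc_self hs
      rw [(hD s hs').deriv]
      have hp := hpos' T' h1 h2 s hs'
      have hΔ := hΔpos (x s)
      exact mul_neg_of_neg_of_pos (mul_neg_of_neg_of_pos hμ (pow_pos hp 3)) hΔ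
    rcases ht.1.lt_or_eq with h | h
    · have := hanti ⟨le_rfl, h1⟩ ht h
      rw [hinit] at this; linarith
    · rw [← h, hinit]
  -- T = ⊤
  have hTtop : T = ⊤ := by
    by_contra hne
    refine hmax hne ⟨x₁₀, fun t ht htT => ?_⟩
    have h1 := hpos' t ht htT t ⟨ht, le_rfl⟩
    have h2 := hbounds t ht htT t ⟨ht, le_rfl⟩
    rw [abs_of_pos h1]; exact h2
  have hltT : ∀ t : ℝ, (t : EReal) < T := fun t => hTtop ▸ EReal.coe_lt_top t
  have hpos : ∀ t : ℝ, 0 ≤ t → 0 < x t := fun t ht => hpos' t ht (hltT t) t ⟨ht, le_rfl⟩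
  have hle : ∀ t : ℝ, 0 ≤ t → x t ≤ x₁₀ := fun t ht => hbounds t ht (hltT t) t ⟨ht, le_rfl⟩
  have hode' : ∀ t : ℝ, 0 ≤ t →
      HasDerivAt x (μ * x t ^ 3 * Real.log (1 + Real.exp (SΔ * x t))) t :=
    fun t ht => hode t ht (hltT t)
  have hcontIci : ContinuousOn x (Set.Ici 0) :=
    fun t ht => (hode' t ht).continuousAt.continuousWithinAt
  have hanti : StrictAntiOn x (Set.Ici 0) := by
    apply strictAntiOn_of_deriv_neg (convex_Ici 0) hcontIci
    intro t ht
    rw [interior_Ici] at ht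
    rw [(hode' t ht.le).deriv]
    have hp := hpos t ht.le
    have hΔ := hΔpos (x t)
    exact mul_neg_of_neg_of_pos (mul_neg_of_neg_of_pos hμ (pow_pos hp 3)) hΔ
  refine ⟨hTtop, hpos, hanti, ?_⟩
  set l := -2 * μ * δ with hldef
  have hl : 0 < l := by nlinarith
  have hg : MonotoneOn (fun t => (x t ^ 2)⁻¹ - l * t) (Set.Ici 0) := by
    apply monotoneOn_of_deriv_nonneg (convex_Ici 0)
    · apply ContinuousOn.sub
      · apply ContinuousOn.inv₀ (hcontIci.pow 2)
        intro t ht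
        exact ne_of_gt (pow_pos (hpos t ht) 2)
      · exact (continuous_const.mul continuous_id).continuousOn
    · intro t ht
      rw [interior_Ici] at ht
      have hlin : HasDerivAt (fun s : ℝ => l * s) l t := by
        simpa using (hasDerivAt_id t).const_mul l
      exact (((hyD t ht.le (hltT t) (hpos t ht.le)).sub
        hlin).differentiableAt).differentiableWithinAt
    · intro t ht
      rw [interior_Ici] at ht
      have hlin : HasDerivAt (fun s : ℝ => l * s) l t := by
        simpa using (hasDerivAt_id t).const_mul l
      have hd := (hyD t ht.le (hltT t) (hpos t ht.le)).sub hlin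
      rw [show (fun t => (x t ^ 2)⁻¹ - l * t) = ((fun t => (x t ^ 2)⁻¹) - fun s => l * s) from rfl, hd.deriv]
      have hΔ := hΔge (x t) (hpos t ht.le).le (hle t ht.le)
      have hμ2 : (0:ℝ) ≤ -2 * μ := by linarith
      rw [hldef]
      nlinarith [mul_nonneg hμ2 (sub_nonneg.2 hΔ)]
  refine ⟨(Real.sqrt l)⁻¹, inv_pos.2 (Real.sqrt_pos.2 hl), ?_⟩
  intro t ht
  have ht0 : (0:ℝ) ≤ t := by linarith
  have hgm := hg Set.self_mem_Ici (Set.mem_Ici.2 ht0) ht0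
  simp only [mul_zero, sub_zero] at hgm
  have h0 : 0 < (x 0 ^ 2)⁻¹ := inv_pos.2 (pow_pos (hpos 0 le_rfl) 2)
  have hyx : l * t < (x t ^ 2)⁻¹ := by linarith
  have hxt := hpos t ht0
  have hlt : 0 < l * t := by positivity
  have h1 : x t ^ 2 < (l * t)⁻¹ := by
    have := inv_strictAnti₀ hlt hyx
    rwa [inv_inv] at this
  have h2 : x t ≤ Real.sqrt ((l * t)⁻¹) := by
    rw [Real.le_sqrt hxt.le (by positivity)]
    exact h1.le
  calc x t ≤ Real.sqrt ((l * t)⁻¹) := h2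
    _ = (Real.sqrt l)⁻¹ / Real.sqrt t := by
        rw [Real.sqrt_inv, Real.sqrt_mul hl.le, mul_inv, div_eq_mul_inv]
end

section
/- Consider the scalar dynamics x₁'(t) = μ·x₁(t)³·Δ(x₁(t)) with Δ(u) = ln(1+e^{S_Δ u}), μ > 0, S_Δ < 0, and x₁(0) = x₁₀ > 0. Then x₁(t) is positive, strictly increasing, globally defined on [0,∞), tends to +∞ as t → ∞, and satisfies x₁(t) = O(ln t). -/
lemma stmt10_fpos (μ SΔ u : ℝ) (hμ : 0 < μ) (hu : 0 < u) :
    0 < μ * u ^ 3 * Real.log (1 + Real.exp (SΔ * u)) := by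
  have h1 : 0 < Real.log (1 + Real.exp (SΔ * u)) :=
    Real.log_pos (by linarith [Real.exp_pos (SΔ * u)])
  have := pow_pos hu 3
  positivity

lemma stmt10_fle (μ SΔ u : ℝ) (hμ : 0 < μ) (hSΔ : SΔ < 0) (hu : 0 ≤ u) :
    μ * u ^ 3 * Real.log (1 + Real.exp (SΔ * u)) ≤
      27 * μ / (-SΔ / 2) ^ 3 * Real.exp (-(-SΔ / 2 * u)) := by
  set a : ℝ := -SΔ / 2 with ha_def
  have ha : 0 < a := by simp only [ha_def]; linarith
  have hau : 0 ≤ a * u := mul_nonneg ha.le hu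
  have hlog : Real.log (1 + Real.exp (SΔ * u)) ≤ Real.exp (SΔ * u) := by
    have := Real.log_le_sub_one_of_pos (x := 1 + Real.exp (SΔ * u))
      (by positivity)
    linarith
  have hexp : Real.exp (SΔ * u) = Real.exp (-(a * u)) * Real.exp (-(a * u)) := by
    rw [← Real.exp_add]; congr 1; simp only [ha_def]; ring
  -- key: u^3 * exp(-(a*u)) ≤ 27 / a^3
  have hkey : u ^ 3 * Real.exp (-(a * u)) ≤ 27 / a ^ 3 := by
    have h3 : a * u / 3 ≤ Real.exp (a * u / 3) := by
      linarith [Real.add_one_le_exp (a * u / 3)]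
    have h4 : (a * u / 3) ^ 3 ≤ Real.exp (a * u) := by
      calc (a * u / 3) ^ 3 ≤ Real.exp (a * u / 3) ^ 3 :=
            pow_le_pow_left₀ (by linarith) h3 3
        _ = Real.exp (a * u) := by rw [← Real.exp_nat_mul]; ring_nf
    have h5 : u ^ 3 ≤ 27 / a ^ 3 * Real.exp (a * u) := by
      have : (a * u / 3) ^ 3 = a ^ 3 / 27 * u ^ 3 := by ring
      rw [this] at h4
      rw [div_mul_eq_mul_div, le_div_iff₀ (by positivity)]
      calc u ^ 3 * a ^ 3 = 27 * (a ^ 3 / 27 * u ^ 3) := by ring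
        _ ≤ 27 * Real.exp (a * u) := by linarith
    calc u ^ 3 * Real.exp (-(a * u)) ≤ (27 / a ^ 3 * Real.exp (a * u)) * Real.exp (-(a * u)) :=
          mul_le_mul_of_nonneg_right h5 (Real.exp_pos _).le
      _ = 27 / a ^ 3 := by rw [mul_assoc, ← Real.exp_add]; simp
  calc μ * u ^ 3 * Real.log (1 + Real.exp (SΔ * u))
      ≤ μ * u ^ 3 * Real.exp (SΔ * u) := by
        apply mul_le_mul_of_nonneg_left hlog (by positivity)
    _ = μ * (u ^ 3 * Real.exp (-(a * u))) * Real.exp (-(a * u)) := by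
        rw [hexp]; ring
    _ ≤ μ * (27 / a ^ 3) * Real.exp (-(a * u)) := by
        apply mul_le_mul_of_nonneg_right _ (Real.exp_pos _).le
        exact mul_le_mul_of_nonneg_left hkey hμ.le
    _ = 27 * μ / a ^ 3 * Real.exp (-(a * u)) := by ring

/-- Slow divergence for the first token: for `x₁' = μ·x₁³·Δ(x₁)` with
`Δ(u) = ln(1+e^{S_Δ u})`, `μ > 0`, `S_Δ < 0` and `x₁(0) = x₁₀ > 0`, the solution
(on a maximal interval `[0,T)`) is globally defined, positive, strictly increasing,
tends to `+∞`, and satisfies `x₁(t) = O(ln t)`. -/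
theorem stmt10 (μ SΔ x₁₀ : ℝ) (hμ : 0 < μ) (hSΔ : SΔ < 0) (hx₀ : 0 < x₁₀)
    (T : EReal) (hT : 0 < T) (x : ℝ → ℝ) (hinit : x 0 = x₁₀)
    (hode : ∀ t : ℝ, 0 ≤ t → (t : EReal) < T →
      HasDerivAt x (μ * x t ^ 3 * Real.log (1 + Real.exp (SΔ * x t))) t)
    (hmax : T ≠ ⊤ → ¬ ∃ M : ℝ, ∀ t : ℝ, 0 ≤ t → (t : EReal) < T → |x t| ≤ M) :
    T = ⊤ ∧ (∀ t : ℝ, 0 ≤ t → 0 < x t) ∧ StrictMonoOn x (Set.Ici 0) ∧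
      Filter.Tendsto x Filter.atTop Filter.atTop ∧
      ∃ C : ℝ, 0 < C ∧ ∀ t : ℝ, 2 ≤ t → x t ≤ C * Real.log t := by
  set a : ℝ := -SΔ / 2 with ha_def
  have ha : 0 < a := by simp only [ha_def]; linarith
  set K : ℝ := 27 * μ / a ^ 3 with hK_def
  have hK : 0 < K := by positivity
  have hfpos : ∀ u : ℝ, 0 < u → 0 < μ * u ^ 3 * Real.log (1 + Real.exp (SΔ * u)) :=
    fun u hu => stmt10_fpos μ SΔ u hμ hu
  have hfle : ∀ u : ℝ, 0 ≤ u → μ * u ^ 3 * Real.log (1 + Real.exp (SΔ * u)) ≤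
      K * Real.exp (-(a * u)) := by
    intro u hu
    have h := stmt10_fle μ SΔ u hμ hSΔ hu
    rw [hK_def, ha_def]
    convert h using 3 <;> rw [ha_def]
  -- continuity on [0,b] for b < T
  have hcont : ∀ b : ℝ, (b : EReal) < T → ContinuousOn x (Set.Icc 0 b) := by
    intro b hb
    intro t ht
    exact ((hode t ht.1 (lt_of_le_of_lt (EReal.coe_le_coe_iff.2 ht.2) hb)).continuousAt).continuousWithinAt
  -- positivity on [0,T)
  have hpos : ∀ t : ℝ, 0 ≤ t → (t : EReal) < T → 0 < x t := by
    intro b hb hbT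
    by_contra hxb
    push_neg at hxb
    set A : Set ℝ := {t ∈ Set.Icc (0:ℝ) b | x t ≤ 0} with hA_def
    have hAne : A.Nonempty := ⟨b, Set.mem_sep (Set.right_mem_Icc.2 hb) hxb⟩
    have hAclosed : IsClosed A := by
      have h1 : A = Set.Icc 0 b ∩ x ⁻¹' Set.Iic 0 := by
        ext t; simp [hA_def, Set.mem_sep_iff, and_comm]
      rw [h1]
      exact ContinuousOn.preimage_isClosed_of_isClosed (hcont b hbT) isClosed_Icc isClosed_Iic
    have hAbdd : BddBelow A := ⟨0, fun t ht => ht.1.1⟩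
    set t₀ : ℝ := sInf A with ht₀_def
    have ht₀mem : t₀ ∈ A := hAclosed.csInf_mem hAne hAbdd
    have ht₀0 : 0 ≤ t₀ := ht₀mem.1.1
    have ht₀b : t₀ ≤ b := ht₀mem.1.2
    have ht₀pos : 0 < t₀ := by
      rcases eq_or_lt_of_le ht₀0 with h | h
      · exfalso; have := ht₀mem.2; rw [← h, hinit] at this; linarith
      · exact h
    have ht₀T : (t₀ : EReal) < T := lt_of_le_of_lt (EReal.coe_le_coe_iff.2 ht₀b) hbT
    -- x > 0 on [0, t₀)
    have hposIco : ∀ s ∈ Set.Ico (0:ℝ) t₀, 0 < x s := by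
      intro s hs
      by_contra hxs
      push_neg at hxs
      have : s ∈ A := ⟨⟨hs.1, le_trans hs.2.le ht₀b⟩, hxs⟩
      exact absurd (csInf_le hAbdd this) (not_le.2 hs.2)
    -- x strictly monotone on [0, t₀]
    have hsm : StrictMonoOn x (Set.Icc 0 t₀) := by
      apply strictMonoOn_of_deriv_pos (convex_Icc 0 t₀)
        ((hcont b hbT).mono (Set.Icc_subset_Icc_right ht₀b))
      intro r hr
      rw [interior_Icc] at hr
      have hrT : (r : EReal) < T := lt_of_le_of_lt (EReal.coe_le_coe_iff.2 hr.2.le) ht₀T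
      rw [(hode r hr.1.le hrT).deriv]
      exact hfpos (x r) (hposIco r ⟨hr.1.le, hr.2⟩)
    have := hsm (Set.left_mem_Icc.2 ht₀0) (Set.right_mem_Icc.2 ht₀0) ht₀pos
    rw [hinit] at this
    have := ht₀mem.2
    linarith
  -- strict monotonicity on [0,T)
  have hmono : ∀ s t : ℝ, 0 ≤ s → s < t → (t : EReal) < T → x s < x t := by
    intro s t hs hst htT
    have hcont' : ContinuousOn x (Set.Icc s t) :=
      (hcont t htT).mono (Set.Icc_subset_Icc_left hs)
    have := strictMonoOn_of_deriv_pos (convex_Icc s t) hcont' (fun r hr => ?_)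
    · exact this (Set.left_mem_Icc.2 hst.le) (Set.right_mem_Icc.2 hst.le) hst
    · rw [interior_Icc] at hr
      have hr0 : 0 ≤ r := le_trans hs hr.1.le
      have hrT : (r : EReal) < T := lt_of_le_of_lt (EReal.coe_le_coe_iff.2 hr.2.le) htT
      rw [(hode r hr0 hrT).deriv]
      exact stmt10_fpos μ SΔ (x r) hμ (hpos r hr0 hrT)
  -- the lower bound x₁₀ ≤ x t
  have hlb : ∀ t : ℝ, 0 ≤ t → (t : EReal) < T → x₁₀ ≤ x t := by
    intro t ht htT
    rcases eq_or_lt_of_le ht with h | h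
    · rw [← h, hinit]
    · rw [← hinit]; exact (hmono 0 t le_rfl h htT).le
  -- the upper bound x t ≤ x₁₀ + K * t
  have hub : ∀ t : ℝ, 0 ≤ t → (t : EReal) < T → x t ≤ x₁₀ + K * t := by
    intro t ht htT
    have hder : ∀ r ∈ Set.Icc (0:ℝ) t, HasDerivAt (fun s => x s - K * s)
        (μ * x r ^ 3 * Real.log (1 + Real.exp (SΔ * x r)) - K) r := by
      intro r hr
      have hrT : (r : EReal) < T := lt_of_le_of_lt (EReal.coe_le_coe_iff.2 hr.2) htT
      have h := (hode r hr.1 hrT).sub ((hasDerivAt_id r).const_mul K)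
      exact h.congr_deriv (by simp)
    have hanti : AntitoneOn (fun s => x s - K * s) (Set.Icc 0 t) := by
      apply antitoneOn_of_deriv_nonpos (convex_Icc 0 t)
      · exact ((hcont t htT).sub (continuousOn_const.mul continuousOn_id))
      · intro r hr
        rw [interior_Icc] at hr
        exact ((hder r ⟨hr.1.le, hr.2.le⟩).differentiableAt).differentiableWithinAt
      · intro r hr
        rw [interior_Icc] at hr
        rw [(hder r ⟨hr.1.le, hr.2.le⟩).deriv]
        have hrT : (r : EReal) < T := lt_of_le_of_lt (EReal.coe_le_coe_iff.2 hr.2.le) htT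
        have hxr : 0 < x r := hpos r hr.1.le hrT
        have h1 := hfle (x r) hxr.le
        have h2 : Real.exp (-(a * x r)) ≤ 1 := by
          rw [Real.exp_le_one_iff]
          have : 0 < a * x r := mul_pos ha hxr
          linarith
        nlinarith [hK]
    have := hanti (Set.left_mem_Icc.2 ht) (Set.right_mem_Icc.2 ht) ht
    simp only [hinit] at this
    linarith
  -- T = ⊤
  have hTtop : T = ⊤ := by
    by_contra hT'
    apply hmax hT'
    have hbot : T ≠ ⊥ := ne_of_gt (lt_trans (by exact_mod_cast EReal.bot_lt_coe 0 : (⊥:EReal) < (0:EReal)) hT)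
    set t₁ : ℝ := T.toReal with ht₁_def
    have hTc : (t₁ : EReal) = T := EReal.coe_toReal hT' hbot
    have ht₁ : 0 < t₁ := by
      have := hT; rw [← hTc] at this; exact_mod_cast this
    refine ⟨x₁₀ + K * t₁, fun t ht htT => ?_⟩
    have htt₁ : t ≤ t₁ := by
      rw [← hTc] at htT; exact_mod_cast htT.le
    have h1 := hpos t ht htT
    have h2 := hub t ht htT
    rw [abs_le]
    constructor
    · nlinarith
    · nlinarith
  subst hTtop
  have hode' : ∀ t : ℝ, 0 ≤ t →
      HasDerivAt x (μ * x t ^ 3 * Real.log (1 + Real.exp (SΔ * x t))) t :=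
    fun t ht => hode t ht (EReal.coe_lt_top t)
  have hpos' : ∀ t : ℝ, 0 ≤ t → 0 < x t := fun t ht => hpos t ht (EReal.coe_lt_top t)
  have hmono' : StrictMonoOn x (Set.Ici 0) :=
    fun s hs t _ hst => hmono s t hs hst (EReal.coe_lt_top t)
  refine ⟨rfl, hpos', hmono', ?_, ?_⟩
  · -- tendsto atTop
    rw [Filter.tendsto_atTop]
    intro L0
    set L : ℝ := max L0 (x₁₀ + 1) with hL_def
    have hLx : x₁₀ < L := lt_of_lt_of_le (by linarith) (le_max_right _ _)
    -- suffices to find one point where x exceeds L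
    suffices h : ∃ t₀ : ℝ, 0 ≤ t₀ ∧ L ≤ x t₀ by
      obtain ⟨t₀, ht₀, hxt₀⟩ := h
      filter_upwards [Filter.eventually_ge_atTop t₀] with t ht
      have : x t₀ ≤ x t := by
        rcases eq_or_lt_of_le ht with h | h
        · rw [h]
        · exact (hmono' (Set.mem_Ici.2 ht₀) (Set.mem_Ici.2 (le_trans ht₀ ht)) h).le
      calc L0 ≤ L := le_max_left _ _
        _ ≤ x t₀ := hxt₀
        _ ≤ x t := this
    by_contra hbdd
    push_neg at hbdd
    have hxle : ∀ t : ℝ, 0 ≤ t → x t ≤ L := fun t ht => (hbdd t ht).le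
    set c : ℝ := μ * x₁₀ ^ 3 * Real.log (1 + Real.exp (SΔ * L)) with hc_def
    have hc : 0 < c := by
      have h1 : 0 < Real.log (1 + Real.exp (SΔ * L)) :=
        Real.log_pos (by linarith [Real.exp_pos (SΔ * L)])
      positivity
    -- derivative lower bound
    have hdlb : ∀ r : ℝ, 0 ≤ r →
        c ≤ μ * x r ^ 3 * Real.log (1 + Real.exp (SΔ * x r)) := by
      intro r hr
      have h1 : x₁₀ ≤ x r := hlb r hr (EReal.coe_lt_top r)
      have h2 : x r ≤ L := hxle r hr
      have h3 : x₁₀ ^ 3 ≤ x r ^ 3 := pow_le_pow_left₀ hx₀.le h1 3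
      have h4 : SΔ * L ≤ SΔ * x r := mul_le_mul_of_nonpos_left h2 hSΔ.le
      have h5 : Real.log (1 + Real.exp (SΔ * L)) ≤ Real.log (1 + Real.exp (SΔ * x r)) := by
        have hp : (0:ℝ) < 1 + Real.exp (SΔ * L) := by positivity
        apply Real.log_le_log hp
        linarith [Real.exp_le_exp.2 h4]
      have h6 : 0 < Real.log (1 + Real.exp (SΔ * L)) :=
        Real.log_pos (by linarith [Real.exp_pos (SΔ * L)])
      rw [hc_def]
      apply mul_le_mul (by nlinarith) h5 h6.le (by nlinarith [pow_pos hx₀ 3])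
    -- comparison: x t ≥ x₁₀ + c t
    have hgrow : ∀ t : ℝ, 0 ≤ t → x₁₀ + c * t ≤ x t := by
      intro t ht
      have hder : ∀ r ∈ Set.Icc (0:ℝ) t, HasDerivAt (fun s => x s - c * s)
          (μ * x r ^ 3 * Real.log (1 + Real.exp (SΔ * x r)) - c) r := by
        intro r hr
        have h := (hode' r hr.1).sub ((hasDerivAt_id r).const_mul c)
        exact h.congr_deriv (by simp)
      have hmon : MonotoneOn (fun s => x s - c * s) (Set.Icc 0 t) := by
        apply monotoneOn_of_deriv_nonneg (convex_Icc 0 t)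
        · intro r hr
          exact (hder r hr).differentiableAt.continuousAt.continuousWithinAt
        · intro r hr
          rw [interior_Icc] at hr
          exact ((hder r ⟨hr.1.le, hr.2.le⟩).differentiableAt).differentiableWithinAt
        · intro r hr
          rw [interior_Icc] at hr
          rw [(hder r ⟨hr.1.le, hr.2.le⟩).deriv]
          linarith [hdlb r hr.1.le]
      have := hmon (Set.left_mem_Icc.2 ht) (Set.right_mem_Icc.2 ht) ht
      simp only [hinit] at this
      linarith
    have hb0 : 0 < (L - x₁₀) / c := div_pos (by linarith) hc
    have hbig := hgrow ((L - x₁₀) / c + 1) (by linarith)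
    have hcancel : c * ((L - x₁₀) / c) = L - x₁₀ := mul_div_cancel₀ _ hc.ne'
    have := hxle ((L - x₁₀) / c + 1) (by linarith)
    nlinarith
  · -- log bound
    set B : ℝ := Real.exp (a * x₁₀) + a * K with hB_def
    have hB1 : 1 ≤ B := by
      have : 1 ≤ Real.exp (a * x₁₀) := Real.one_le_exp (by positivity)
      nlinarith
    have hlogB : 0 ≤ Real.log B := Real.log_nonneg hB1
    have hlog2 : 0 < Real.log 2 := Real.log_pos (by norm_num)
    refine ⟨1 / a * (Real.log B / Real.log 2 + 1), by positivity, fun t ht => ?_⟩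
    -- exp(a x t) ≤ exp(a x₁₀) + a K t
    have hz : Real.exp (a * x t) ≤ Real.exp (a * x₁₀) + a * K * t := by
      have ht0 : (0:ℝ) ≤ t := by linarith
      have hder : ∀ r ∈ Set.Icc (0:ℝ) t,
          HasDerivAt (fun s => Real.exp (a * x s) - a * K * s)
            (Real.exp (a * x r) * (a * (μ * x r ^ 3 * Real.log (1 + Real.exp (SΔ * x r))))
              - a * K) r := by
        intro r hr
        have h1 := ((hode' r hr.1).const_mul a).exp
        have h2 := h1.sub ((hasDerivAt_id r).const_mul (a * K))
        exact h2.congr_deriv (by simp)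
      have hanti : AntitoneOn (fun s => Real.exp (a * x s) - a * K * s) (Set.Icc 0 t) := by
        apply antitoneOn_of_deriv_nonpos (convex_Icc 0 t)
        · intro r hr
          exact (hder r hr).differentiableAt.continuousAt.continuousWithinAt
        · intro r hr
          rw [interior_Icc] at hr
          exact (hder r ⟨hr.1.le, hr.2.le⟩).differentiableAt.differentiableWithinAt
        · intro r hr
          rw [interior_Icc] at hr
          rw [(hder r ⟨hr.1.le, hr.2.le⟩).deriv]
          have hxr : 0 < x r := hpos' r hr.1.le
          have h1 := hfle (x r) hxr.le
          have h2 : Real.exp (a * x r) * (a * (μ * x r ^ 3 * Real.log (1 + Real.exp (SΔ * x r))))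
              ≤ Real.exp (a * x r) * (a * (K * Real.exp (-(a * x r)))) := by
            apply mul_le_mul_of_nonneg_left _ (Real.exp_pos _).le
            exact mul_le_mul_of_nonneg_left h1 ha.le
          have h3 : Real.exp (a * x r) * (a * (K * Real.exp (-(a * x r)))) = a * K := by
            rw [show Real.exp (a * x r) * (a * (K * Real.exp (-(a * x r))))
              = a * K * (Real.exp (a * x r) * Real.exp (-(a * x r))) by ring,
              ← Real.exp_add]
            simp
          linarith
      have := hanti (Set.left_mem_Icc.2 ht0) (Set.right_mem_Icc.2 ht0) ht0
      simp only [hinit] at this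
      linarith
    -- hence a * x t ≤ log B + log t
    have hBt : Real.exp (a * x t) ≤ B * t := by
      have h1 : Real.exp (a * x₁₀) ≤ Real.exp (a * x₁₀) * t := by
        nlinarith [Real.exp_pos (a * x₁₀)]
      have h2 : a * K * t ≤ a * K * t := le_rfl
      rw [hB_def]; nlinarith [Real.exp_pos (a * x₁₀)]
    have hax : a * x t ≤ Real.log B + Real.log t := by
      have h1 : a * x t = Real.log (Real.exp (a * x t)) := (Real.log_exp _).symm
      rw [h1, ← Real.log_mul (by positivity) (by positivity : (0:ℝ) < t).ne']
      exact Real.log_le_log (Real.exp_pos _) hBt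
    have hlogt : Real.log 2 ≤ Real.log t := Real.log_le_log (by norm_num) ht
    -- conclude
    have hfin : a * x t ≤ (Real.log B / Real.log 2 + 1) * Real.log t := by
      have h1 : Real.log B ≤ Real.log B / Real.log 2 * Real.log t := by
        rw [div_mul_eq_mul_div, le_div_iff₀ hlog2]
        nlinarith
      nlinarith
    calc x t = 1 / a * (a * x t) := by field_simp
      _ ≤ 1 / a * ((Real.log B / Real.log 2 + 1) * Real.log t) := by
          apply mul_le_mul_of_nonneg_left hfin (by positivity)
      _ = 1 / a * (Real.log B / Real.log 2 + 1) * Real.log t := by ring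
end

section
/- In the one-dimensional Mamba dynamics x_l'(t) = Σ_{j=1}^{l} P_{lj}(t) x_j(t) with μ = S_C^⊤S_B < 0 and nonzero initial data x_{l0}, each token x_l(t) is globally defined on [0,∞), has constant sign (the sign of x_{l0}), is monotone toward 0, and satisfies x_l(t) = O(1/√t). -/
/-- Softplus step size `Δ(u) = ln(1 + e^{S_Δ u})`. -/
noncomputable def stepSize (SΔ u : ℝ) : ℝ := Real.log (1 + Real.exp (SΔ * u))

/-- Hidden attention score `P_{lj}(t)` of the one-dimensional Mamba dynamics. -/
noncomputable def hiddenAttn {L : ℕ} (μ SΔ a : ℝ) (x : Fin L → ℝ → ℝ)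
    (l j : Fin L) (t : ℝ) : ℝ :=
  if l = j then μ * x l t ^ 2 * stepSize SΔ (x l t)
  else μ * x l t * x j t * stepSize SΔ (x j t) *
    Real.exp (-a * ∑ k ∈ Finset.Ioc j l, stepSize SΔ (x k t))

lemma stepSize_pos (SΔ u : ℝ) : 0 < stepSize SΔ u :=
  Real.log_pos (by linarith [Real.exp_pos (SΔ * u)])

lemma stepSize_mono {SΔ u v : ℝ} (h : SΔ * u ≤ v) :
    stepSize SΔ u ≤ Real.log (1 + Real.exp v) :=
  Real.log_le_log (by positivity) (by linarith [Real.exp_le_exp.2 h])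

noncomputable def qcoef {L : ℕ} (μ SΔ a : ℝ) (x : Fin L → ℝ → ℝ)
    (l j : Fin L) (t : ℝ) : ℝ :=
  μ * x j t ^ 2 * stepSize SΔ (x j t) *
    (if l = j then 1 else Real.exp (-a * ∑ k ∈ Finset.Ioc j l, stepSize SΔ (x k t)))

noncomputable def Gfun {L : ℕ} (μ SΔ a : ℝ) (x : Fin L → ℝ → ℝ) (l : Fin L) (t : ℝ) : ℝ :=
  ∑ j ∈ Finset.Iic l, qcoef μ SΔ a x l j t

lemma hiddenAttn_mul {L : ℕ} (μ SΔ a : ℝ) (x : Fin L → ℝ → ℝ) (l j : Fin L) (t : ℝ) :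
    hiddenAttn μ SΔ a x l j t * x j t = x l t * qcoef μ SΔ a x l j t := by
  rcases eq_or_ne l j with h | h
  · subst h; simp [hiddenAttn, qcoef]; ring
  · simp [hiddenAttn, qcoef, h]; ring

lemma sum_rewrite {L : ℕ} (μ SΔ a : ℝ) (x : Fin L → ℝ → ℝ) (l : Fin L) (t : ℝ) :
    ∑ j ∈ Finset.Iic l, hiddenAttn μ SΔ a x l j t * x j t = x l t * Gfun μ SΔ a x l t := by
  rw [Gfun, Finset.mul_sum]
  exact Finset.sum_congr rfl fun j _ => hiddenAttn_mul μ SΔ a x l j t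

lemma qcoef_nonpos {L : ℕ} {μ : ℝ} (SΔ a : ℝ) (x : Fin L → ℝ → ℝ) (l j : Fin L) (t : ℝ)
    (hμ : μ < 0) : qcoef μ SΔ a x l j t ≤ 0 := by
  unfold qcoef
  have h1 := stepSize_pos SΔ (x j t)
  have h2 : (0:ℝ) < (if l = j then 1 else Real.exp (-a * ∑ k ∈ Finset.Ioc j l, stepSize SΔ (x k t))) := by
    split
    · norm_num
    · exact Real.exp_pos _
  have h3 : 0 ≤ x j t ^ 2 := sq_nonneg _
  have hbase : μ * x j t ^ 2 * stepSize SΔ (x j t) ≤ 0 := by nlinarith [mul_nonneg h3 h1.le]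
  exact mul_nonpos_iff.2 (Or.inr ⟨hbase, h2.le⟩)

lemma qcoef_lb {L : ℕ} {μ : ℝ} {a : ℝ} (SΔ : ℝ) (x : Fin L → ℝ → ℝ) (l j : Fin L) (t : ℝ)
    (hμ : μ < 0) (ha : 0 < a) :
    μ * x j t ^ 2 * stepSize SΔ (x j t) ≤ qcoef μ SΔ a x l j t := by
  unfold qcoef
  have h1 := stepSize_pos SΔ (x j t)
  have h3 : 0 ≤ x j t ^ 2 := sq_nonneg _
  have h2 : (if l = j then 1 else Real.exp (-a * ∑ k ∈ Finset.Ioc j l, stepSize SΔ (x k t))) ≤ 1 := by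
    split
    · exact le_rfl
    · refine Real.exp_le_one_iff.2 ?_
      have hs : 0 ≤ ∑ k ∈ Finset.Ioc j l, stepSize SΔ (x k t) :=
        Finset.sum_nonneg fun k _ => (stepSize_pos SΔ (x k t)).le
      nlinarith
  have hbase : μ * x j t ^ 2 * stepSize SΔ (x j t) ≤ 0 := by nlinarith [mul_nonneg h3 h1.le]
  have := mul_le_mul_of_nonpos_left h2 hbase
  linarith

lemma Gfun_nonpos {L : ℕ} {μ : ℝ} (SΔ a : ℝ) (x : Fin L → ℝ → ℝ) (l : Fin L) (t : ℝ)
    (hμ : μ < 0) : Gfun μ SΔ a x l t ≤ 0 :=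
  Finset.sum_nonpos fun j _ => qcoef_nonpos SΔ a x l j t hμ

lemma Gfun_le_diag {L : ℕ} {μ : ℝ} (SΔ a : ℝ) (x : Fin L → ℝ → ℝ) (l : Fin L) (t : ℝ)
    (hμ : μ < 0) :
    Gfun μ SΔ a x l t ≤ μ * x l t ^ 2 * stepSize SΔ (x l t) := by
  have hmem : l ∈ Finset.Iic l := Finset.mem_Iic.2 le_rfl
  rw [Gfun, ← Finset.add_sum_erase _ _ hmem]
  have h1 : qcoef μ SΔ a x l l t = μ * x l t ^ 2 * stepSize SΔ (x l t) := by
    simp [qcoef]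
  have h2 : ∑ j ∈ (Finset.Iic l).erase l, qcoef μ SΔ a x l j t ≤ 0 :=
    Finset.sum_nonpos fun j _ => qcoef_nonpos SΔ a x l j t hμ
  linarith

lemma Gfun_lb {L : ℕ} {μ a : ℝ} (SΔ : ℝ) (x : Fin L → ℝ → ℝ) (l : Fin L) (t : ℝ)
    (hμ : μ < 0) (ha : 0 < a) (hb : ∀ j, |x j t| ≤ |x j 0|) :
    μ * ∑ j : Fin L, x j 0 ^ 2 * Real.log (1 + Real.exp (|SΔ| * |x j 0|))
      ≤ Gfun μ SΔ a x l t := by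
  have hterm : ∀ j : Fin L, x j t ^ 2 * stepSize SΔ (x j t)
      ≤ x j 0 ^ 2 * Real.log (1 + Real.exp (|SΔ| * |x j 0|)) := by
    intro j
    have hsq : x j t ^ 2 ≤ x j 0 ^ 2 := by
      rw [← sq_abs (x j t), ← sq_abs (x j 0)]
      exact pow_le_pow_left₀ (abs_nonneg _) (hb j) 2
    have hexp : SΔ * x j t ≤ |SΔ| * |x j 0| := by
      calc SΔ * x j t ≤ |SΔ * x j t| := le_abs_self _
        _ = |SΔ| * |x j t| := abs_mul _ _
        _ ≤ |SΔ| * |x j 0| := mul_le_mul_of_nonneg_left (hb j) (abs_nonneg _)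
    exact mul_le_mul hsq (stepSize_mono hexp) (stepSize_pos SΔ _).le (sq_nonneg _)
  have h1 : Gfun μ SΔ a x l t ≥ ∑ j ∈ Finset.Iic l, μ * x j t ^ 2 * stepSize SΔ (x j t) :=
    Finset.sum_le_sum fun j _ => qcoef_lb SΔ x l j t hμ ha
  have h2 : ∑ j : Fin L, μ * x j t ^ 2 * stepSize SΔ (x j t)
      ≤ ∑ j ∈ Finset.Iic l, μ * x j t ^ 2 * stepSize SΔ (x j t) := by
    have hneg := Finset.sum_le_sum_of_subset_of_nonneg
      (f := fun j => -(μ * x j t ^ 2 * stepSize SΔ (x j t)))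
      (Finset.subset_univ (Finset.Iic l)) (fun j _ _ => by
        have h5 : μ * (x j t ^ 2 * stepSize SΔ (x j t)) ≤ 0 :=
          mul_nonpos_iff.2 (Or.inr ⟨hμ.le,
            mul_nonneg (sq_nonneg (x j t)) (stepSize_pos SΔ (x j t)).le⟩)
        nlinarith [h5])
    simp only [Finset.sum_neg_distrib, neg_le_neg_iff] at hneg
    exact hneg
  have h3 : μ * ∑ j : Fin L, x j 0 ^ 2 * Real.log (1 + Real.exp (|SΔ| * |x j 0|))
      ≤ ∑ j : Fin L, μ * x j t ^ 2 * stepSize SΔ (x j t) := by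
    rw [Finset.mul_sum]
    refine Finset.sum_le_sum fun j _ => ?_
    have := hterm j
    have h4 : 0 ≤ x j t ^ 2 * stepSize SΔ (x j t) :=
      mul_nonneg (sq_nonneg _) (stepSize_pos SΔ _).le
    calc μ * (x j 0 ^ 2 * Real.log (1 + Real.exp (|SΔ| * |x j 0|)))
        ≤ μ * (x j t ^ 2 * stepSize SΔ (x j t)) := by
          exact mul_le_mul_of_nonpos_left this hμ.le
      _ = μ * x j t ^ 2 * stepSize SΔ (x j t) := by ring
  linarith

lemma stepSize_pos' (SΔ u : ℝ) : 0 < Real.log (1 + Real.exp (SΔ * u)) :=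
  Real.log_pos (by linarith [Real.exp_pos (SΔ * u)])

lemma stepSize_mono' {SΔ u v : ℝ} (h : SΔ * u ≤ v) :
    Real.log (1 + Real.exp (SΔ * u)) ≤ Real.log (1 + Real.exp v) :=
  Real.log_le_log (by positivity) (by linarith [Real.exp_le_exp.2 h])

lemma decr_of_deriv_nonpos {f f' : ℝ → ℝ} {a b : ℝ}
    (hd : ∀ t ∈ Set.Icc a b, HasDerivAt f (f' t) t)
    (h0 : ∀ t ∈ Set.Icc a b, f' t ≤ 0) (hab : a ≤ b) : f b ≤ f a := by
  have hc : ContinuousOn f (Set.Icc a b) := fun t ht =>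
    (hd t ht).continuousAt.continuousWithinAt
  have hdiff : DifferentiableOn ℝ f (interior (Set.Icc a b)) := fun t ht =>
    ((hd t (interior_subset ht)).differentiableAt).differentiableWithinAt
  have := antitoneOn_of_deriv_nonpos (convex_Icc a b) hc hdiff (fun t ht => by
    rw [(hd t (interior_subset ht)).deriv]; exact h0 t (interior_subset ht))
  exact this ⟨le_rfl, hab⟩ ⟨hab, le_rfl⟩ hab

lemma incr_of_deriv_nonneg {f f' : ℝ → ℝ} {a b : ℝ}
    (hd : ∀ t ∈ Set.Icc a b, HasDerivAt f (f' t) t)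
    (h0 : ∀ t ∈ Set.Icc a b, 0 ≤ f' t) (hab : a ≤ b) : f a ≤ f b := by
  have := decr_of_deriv_nonpos (f := fun t => -f t) (f' := fun t => -f' t)
    (fun t ht => (hd t ht).neg) (fun t ht => by simpa using h0 t ht) hab
  simp only [neg_le_neg_iff] at this
  simpa using this


/-- Convergence scenario: in the one-dimensional Mamba dynamics
`x_l' = Σ_{j ≤ l} P_{lj}·x_j` with `μ = S_C^⊤S_B < 0` and nonzero initial data, each
token is globally defined, keeps the sign of its initial value, `|x_l|` is monotone
toward `0`, and `x_l(t) = O(1/√t)`. -/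
theorem stmt12 (L : ℕ) (μ SΔ a : ℝ) (hμ : μ < 0) (ha : 0 < a)
    (x : Fin L → ℝ → ℝ) (hinit : ∀ l : Fin L, x l 0 ≠ 0)
    (T : EReal) (hT : 0 < T)
    (hode : ∀ (l : Fin L) (t : ℝ), 0 ≤ t → (t : EReal) < T →
      HasDerivAt (x l) (∑ j ∈ Finset.Iic l, hiddenAttn μ SΔ a x l j t * x j t) t)
    (hmax : T ≠ ⊤ →
      ¬ ∃ M : ℝ, ∀ (l : Fin L) (t : ℝ), 0 ≤ t → (t : EReal) < T → |x l t| ≤ M) :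
    T = ⊤ ∧
      (∀ (l : Fin L) (t : ℝ), 0 ≤ t →
        (0 < x l 0 → 0 < x l t) ∧ (x l 0 < 0 → x l t < 0)) ∧
      (∀ l : Fin L, AntitoneOn (fun t => |x l t|) (Set.Ici 0)) ∧
      (∀ l : Fin L, ∃ C : ℝ, 0 < C ∧ ∀ t : ℝ, 1 ≤ t → |x l t| ≤ C / Real.sqrt t) := by
  classical
  have hode' : ∀ (l : Fin L) (t : ℝ), 0 ≤ t → (t : EReal) < T →
      HasDerivAt (x l) (x l t * Gfun μ SΔ a x l t) t := by
    intro l t ht hlt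
    have h := hode l t ht hlt
    rwa [sum_rewrite] at h
  -- squares decrease
  have hsq : ∀ (l : Fin L) (s t : ℝ), 0 ≤ s → s ≤ t → (t : EReal) < T →
      x l t ^ 2 ≤ x l s ^ 2 := by
    intro l s t hs hst hlt
    refine decr_of_deriv_nonpos (f := fun u => x l u ^ 2)
      (f' := fun u => 2 * x l u * (x l u * Gfun μ SΔ a x l u)) ?_ ?_ hst
    · intro u hu
      have hu0 : 0 ≤ u := hs.trans hu.1
      have huT : (u : EReal) < T := lt_of_le_of_lt (EReal.coe_le_coe_iff.2 hu.2) hlt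
      have h := (hode' l u hu0 huT).fun_pow 2
      refine h.congr_deriv ?_
      push_cast
      ring
    · intro u hu
      have hG := Gfun_nonpos SΔ a x l u hμ
      have h1 : x l u ^ 2 * Gfun μ SΔ a x l u ≤ 0 :=
        mul_nonpos_iff.2 (Or.inl ⟨sq_nonneg _, hG⟩)
      show 2 * x l u * (x l u * Gfun μ SΔ a x l u) ≤ 0
      nlinarith [h1]
  -- T = ⊤
  have hTtop : T = ⊤ := by
    by_contra hne
    refine hmax hne ?_
    obtain ⟨M, hM⟩ := Finite.exists_le fun l : Fin L => |x l 0|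
    refine ⟨M, fun l t ht hlt => ?_⟩
    have h2 := hsq l 0 t le_rfl ht hlt
    have h3 : |x l t| ≤ |x l 0| := by
      rw [← Real.sqrt_sq_eq_abs, ← Real.sqrt_sq_eq_abs]
      exact Real.sqrt_le_sqrt h2
    exact h3.trans (hM l)
  have hodeAll : ∀ (l : Fin L) (t : ℝ), 0 ≤ t →
      HasDerivAt (x l) (x l t * Gfun μ SΔ a x l t) t := by
    intro l t ht
    exact hode' l t ht (by rw [hTtop]; exact EReal.coe_lt_top t)
  have habs : ∀ (l : Fin L) (s t : ℝ), 0 ≤ s → s ≤ t → |x l t| ≤ |x l s| := by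
    intro l s t hs hst
    have h := hsq l s t hs hst (by rw [hTtop]; exact EReal.coe_lt_top t)
    rw [← Real.sqrt_sq_eq_abs, ← Real.sqrt_sq_eq_abs]
    exact Real.sqrt_le_sqrt h
  -- lower bound for G
  set K : ℝ := -μ * ∑ j : Fin L, x j 0 ^ 2 * Real.log (1 + Real.exp (|SΔ| * |x j 0|)) with hK
  have hGlb : ∀ (l : Fin L) (t : ℝ), 0 ≤ t → -K ≤ Gfun μ SΔ a x l t := by
    intro l t ht
    have h := Gfun_lb SΔ x l t hμ ha (fun j => habs j 0 t le_rfl ht)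
    rw [hK]
    linarith
  -- nonvanishing
  have hnz : ∀ (l : Fin L) (t : ℝ), 0 ≤ t → x l t ≠ 0 := by
    intro l t ht hzero
    have hw : x l 0 ^ 2 * Real.exp (2 * K * 0) ≤ x l t ^ 2 * Real.exp (2 * K * t) := by
      refine incr_of_deriv_nonneg (f := fun u => x l u ^ 2 * Real.exp (2 * K * u))
        (f' := fun u => 2 * x l u * (x l u * Gfun μ SΔ a x l u) * Real.exp (2 * K * u)
          + x l u ^ 2 * (Real.exp (2 * K * u) * (2 * K))) ?_ ?_ ht
      · intro u hu
        have h1 := (hodeAll l u hu.1).fun_pow 2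
        have h2 : HasDerivAt (fun u : ℝ => Real.exp (2 * K * u))
            (Real.exp (2 * K * u) * (2 * K)) u := by
          have h3 : HasDerivAt (fun u : ℝ => 2 * K * u) (2 * K) u := by
            simpa using (hasDerivAt_id u).const_mul (2 * K)
          exact h3.exp
        have h4 := h1.fun_mul h2
        refine h4.congr_deriv ?_
        push_cast
        ring
      · intro u hu
        have h5 : 0 ≤ Real.exp (2 * K * u) * (x l u ^ 2 * (Gfun μ SΔ a x l u + K)) :=
          mul_nonneg (Real.exp_pos _).le
            (mul_nonneg (sq_nonneg _) (by linarith [hGlb l u hu.1]))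
        show 0 ≤ 2 * x l u * (x l u * Gfun μ SΔ a x l u) * Real.exp (2 * K * u)
          + x l u ^ 2 * (Real.exp (2 * K * u) * (2 * K))
        nlinarith [h5]
    have hx0 : 0 < x l 0 ^ 2 :=
      lt_of_le_of_ne (sq_nonneg _) (Ne.symm (pow_ne_zero 2 (hinit l)))
    rw [hzero] at hw
    have := Real.exp_pos (2 * K * 0)
    nlinarith [hw, hx0, this]
  -- sign preservation
  have hsign : ∀ (l : Fin L) (t : ℝ), 0 ≤ t →
      (0 < x l 0 → 0 < x l t) ∧ (x l 0 < 0 → x l t < 0) := by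
    intro l t ht
    have hcont : ContinuousOn (x l) (Set.Icc 0 t) := fun s hs =>
      (hodeAll l s hs.1).continuousAt.continuousWithinAt
    constructor
    · intro hpos
      by_contra hle
      push_neg at hle
      obtain ⟨s, hs, hxs⟩ := intermediate_value_Icc' ht hcont ⟨hle, hpos.le⟩
      exact hnz l s hs.1 hxs
    · intro hneg
      by_contra hle
      push_neg at hle
      obtain ⟨s, hs, hxs⟩ := intermediate_value_Icc ht hcont ⟨hneg.le, hle⟩
      exact hnz l s hs.1 hxs
  refine ⟨hTtop, hsign, fun l s hs t ht hst => habs l s t hs hst, ?_⟩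
  -- decay
  intro l
  set δ : ℝ := Real.log (1 + Real.exp (-(|SΔ| * |x l 0|))) with hδ
  have hδpos : 0 < δ := Real.log_pos (by linarith [Real.exp_pos (-(|SΔ| * |x l 0|))])
  have hδle : ∀ t : ℝ, 0 ≤ t → δ ≤ stepSize SΔ (x l t) := by
    intro t ht
    have hb := habs l 0 t le_rfl ht
    have h2 : |SΔ * x l t| ≤ |SΔ| * |x l 0| := by
      rw [abs_mul]; exact mul_le_mul_of_nonneg_left hb (abs_nonneg _)
    have h1 : -(|SΔ| * |x l 0|) ≤ SΔ * x l t := by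
      have := neg_abs_le (SΔ * x l t)
      linarith
    rw [hδ]
    unfold stepSize
    exact Real.log_le_log (by positivity) (by linarith [Real.exp_le_exp.2 h1])
  set c : ℝ := -(2 * μ * δ) with hc
  have hcpos : 0 < c := by rw [hc]; nlinarith
  have hz : ∀ t : ℝ, 1 ≤ t → c * t ≤ (x l t ^ 2)⁻¹ := by
    intro t ht
    have h0t : (0:ℝ) ≤ t := by linarith
    have key : (x l 0 ^ 2)⁻¹ - c * 0 ≤ (x l t ^ 2)⁻¹ - c * t := by
      refine incr_of_deriv_nonneg (f := fun u => (x l u ^ 2)⁻¹ - c * u)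
        (f' := fun u => -(2 * x l u * (x l u * Gfun μ SΔ a x l u)) / (x l u ^ 2) ^ 2 - c)
        ?_ ?_ h0t
      · intro u hu
        have h1 := ((hodeAll l u hu.1).fun_pow 2).fun_inv (pow_ne_zero 2 (hnz l u hu.1))
        have h2 : HasDerivAt (fun u : ℝ => c * u) c u := by
          simpa using (hasDerivAt_id u).const_mul c
        have h3 := h1.fun_sub h2
        refine h3.congr_deriv ?_
        push_cast
        ring
      · intro u hu
        have hxne := hnz l u hu.1
        have hx2 : 0 < x l u ^ 2 := lt_of_le_of_ne (sq_nonneg _) (Ne.symm (pow_ne_zero 2 hxne))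
        have hGd := Gfun_le_diag SΔ a x l u hμ
        have hΔ := hδle u hu.1
        have hG2 : Gfun μ SΔ a x l u ≤ μ * x l u ^ 2 * δ := by
          have h6 : x l u ^ 2 * δ ≤ x l u ^ 2 * stepSize SΔ (x l u) :=
            mul_le_mul_of_nonneg_left hΔ (sq_nonneg _)
          have h7 : μ * (x l u ^ 2 * stepSize SΔ (x l u)) ≤ μ * (x l u ^ 2 * δ) :=
            mul_le_mul_of_nonpos_left h6 hμ.le
          calc Gfun μ SΔ a x l u ≤ μ * x l u ^ 2 * stepSize SΔ (x l u) := hGd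
            _ = μ * (x l u ^ 2 * stepSize SΔ (x l u)) := by ring
            _ ≤ μ * (x l u ^ 2 * δ) := h7
            _ = μ * x l u ^ 2 * δ := by ring
        have h8 : c ≤ -(2 * x l u * (x l u * Gfun μ SΔ a x l u)) / (x l u ^ 2) ^ 2 := by
          rw [le_div_iff₀ (by positivity)]
          have h9 := mul_le_mul_of_nonneg_left hG2 (by positivity : (0:ℝ) ≤ 2 * x l u ^ 2)
          rw [hc]
          nlinarith [h9, sq_nonneg (x l u)]
        linarith
    have hx0 : 0 < (x l 0 ^ 2)⁻¹ := by
      have : 0 < x l 0 ^ 2 := lt_of_le_of_ne (sq_nonneg _) (Ne.symm (pow_ne_zero 2 (hinit l)))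
      positivity
    linarith
  refine ⟨(Real.sqrt c)⁻¹, by positivity, fun t ht => ?_⟩
  have h0t : (0:ℝ) ≤ t := by linarith
  have hx2 : 0 < x l t ^ 2 :=
    lt_of_le_of_ne (sq_nonneg _) (Ne.symm (pow_ne_zero 2 (hnz l t h0t)))
  have hct : 0 < c * t := by nlinarith
  have h1 : x l t ^ 2 ≤ (c * t)⁻¹ := by
    have h2 := hz t ht
    rw [inv_eq_one_div, le_div_iff₀ hx2] at h2
    rw [inv_eq_one_div, le_div_iff₀ hct]
    nlinarith [h2]
  have h3 : |x l t| ≤ Real.sqrt ((c * t)⁻¹) := by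
    rw [← Real.sqrt_sq_eq_abs]
    exact Real.sqrt_le_sqrt h1
  have h4 : Real.sqrt ((c * t)⁻¹) = (Real.sqrt c)⁻¹ / Real.sqrt t := by
    rw [Real.sqrt_inv, Real.sqrt_mul hcpos.le, mul_inv, div_eq_mul_inv]
  rw [← h4]
  exact h3
end

section
/- In the one-dimensional Mamba dynamics with μ = S_C^⊤S_B < 0, all hidden attention scores satisfy P_{lj}(t) = O(1/t) as t → ∞. -/
/-- Upper bound for `stepSize SΔ u` when `|u| ≤ m`. -/
noncomputable def ubΔ (SΔ m : ℝ) : ℝ := Real.log (1 + Real.exp (|SΔ| * m))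

/-- Lower bound for `stepSize SΔ u` when `|u| ≤ m`. -/
noncomputable def lbΔ (SΔ m : ℝ) : ℝ := Real.log (1 + Real.exp (-(|SΔ| * m)))

lemma lbΔ_pos (SΔ m : ℝ) : 0 < lbΔ SΔ m := by
  unfold lbΔ
  apply Real.log_pos
  linarith [Real.exp_pos (-(|SΔ| * m))]

lemma stepSize_le_ubΔ (SΔ u m : ℝ) (h : |u| ≤ m) : stepSize SΔ u ≤ ubΔ SΔ m := by
  unfold stepSize ubΔ
  have h1 : SΔ * u ≤ |SΔ| * m := by
    calc SΔ * u ≤ |SΔ * u| := le_abs_self _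
    _ = |SΔ| * |u| := abs_mul _ _
    _ ≤ |SΔ| * m := by
        exact mul_le_mul_of_nonneg_left h (abs_nonneg _)
  have := Real.exp_le_exp.2 h1
  have hpos : (0:ℝ) < 1 + Real.exp (SΔ * u) := by positivity
  apply Real.log_le_log hpos
  linarith

lemma lbΔ_le_stepSize (SΔ u m : ℝ) (h : |u| ≤ m) : lbΔ SΔ m ≤ stepSize SΔ u := by
  unfold stepSize lbΔ
  have h1 : -(|SΔ| * m) ≤ SΔ * u := by
    have : -(SΔ * u) ≤ |SΔ| * m := by
      calc -(SΔ * u) ≤ |SΔ * u| := neg_le_abs _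
      _ = |SΔ| * |u| := abs_mul _ _
      _ ≤ |SΔ| * m := mul_le_mul_of_nonneg_left h (abs_nonneg _)
    linarith
  have := Real.exp_le_exp.2 h1
  have hpos : (0:ℝ) < 1 + Real.exp (-(|SΔ| * m)) := by positivity
  apply Real.log_le_log hpos
  linarith

/-- Convergence scenario: in the one-dimensional Mamba dynamics with
`μ = S_C^⊤S_B < 0`, all hidden attention scores satisfy `P_{lj}(t) = O(1/t)`. -/
theorem stmt13 (L : ℕ) (μ SΔ a : ℝ) (hμ : μ < 0) (ha : 0 < a)
    (x : Fin L → ℝ → ℝ) (hinit : ∀ l : Fin L, x l 0 ≠ 0)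
    (hode : ∀ (l : Fin L) (t : ℝ), 0 ≤ t →
      HasDerivAt (x l) (∑ j ∈ Finset.Iic l, hiddenAttn μ SΔ a x l j t * x j t) t) :
    ∀ l j : Fin L, j ≤ l →
      ∃ C : ℝ, 0 < C ∧ ∀ t : ℝ, 1 ≤ t → |hiddenAttn μ SΔ a x l j t| ≤ C / t := by
  -- the factor structure of the ODE right-hand side
  have hS : ∀ (j : Fin L) (t : ℝ), 0 ≤ t → ∃ S : ℝ, 0 ≤ S ∧
      x j t ^ 2 * stepSize SΔ (x j t) ≤ S ∧
      S ≤ (∑ i ∈ Finset.Iic j, x i t ^ 2 * stepSize SΔ (x i t)) ∧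
      HasDerivAt (x j) (μ * x j t * S) t := by
    intro j t ht
    have hqnn : ∀ i : Fin L, 0 ≤ x i t ^ 2 * stepSize SΔ (x i t) *
        (if j = i then 1 else Real.exp (-a * ∑ k ∈ Finset.Ioc i j, stepSize SΔ (x k t))) := by
      intro i
      have h1 : 0 ≤ x i t ^ 2 * stepSize SΔ (x i t) :=
        mul_nonneg (sq_nonneg _) (stepSize_pos _ _).le
      split
      · simpa using h1
      · exact mul_nonneg h1 (Real.exp_pos _).le
    refine ⟨∑ i ∈ Finset.Iic j, x i t ^ 2 * stepSize SΔ (x i t) *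
      (if j = i then 1 else Real.exp (-a * ∑ k ∈ Finset.Ioc i j, stepSize SΔ (x k t))),
      ?_, ?_, ?_, ?_⟩
    · exact Finset.sum_nonneg fun i _ => hqnn i
    · have hmem : j ∈ Finset.Iic j := Finset.mem_Iic.2 le_rfl
      have := Finset.single_le_sum (f := fun i => x i t ^ 2 * stepSize SΔ (x i t) *
        (if j = i then 1 else Real.exp (-a * ∑ k ∈ Finset.Ioc i j, stepSize SΔ (x k t))))
        (fun i _ => hqnn i) hmem
      simpa using this
    · apply Finset.sum_le_sum
      intro i _
      have h1 : 0 ≤ x i t ^ 2 * stepSize SΔ (x i t) :=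
        mul_nonneg (sq_nonneg _) (stepSize_pos _ _).le
      split
      · simp
      · have he : Real.exp (-a * ∑ k ∈ Finset.Ioc i j, stepSize SΔ (x k t)) ≤ 1 := by
          rw [Real.exp_le_one_iff]
          have hsum : 0 ≤ ∑ k ∈ Finset.Ioc i j, stepSize SΔ (x k t) :=
            Finset.sum_nonneg fun k _ => (stepSize_pos _ _).le
          have : 0 ≤ a * ∑ k ∈ Finset.Ioc i j, stepSize SΔ (x k t) :=
            mul_nonneg ha.le hsum
          linarith
        calc x i t ^ 2 * stepSize SΔ (x i t) * _ ≤ x i t ^ 2 * stepSize SΔ (x i t) * 1 :=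
              mul_le_mul_of_nonneg_left he h1
        _ = x i t ^ 2 * stepSize SΔ (x i t) := mul_one _
    · have heq : (∑ i ∈ Finset.Iic j, hiddenAttn μ SΔ a x j i t * x i t) =
          μ * x j t * ∑ i ∈ Finset.Iic j, x i t ^ 2 * stepSize SΔ (x i t) *
            (if j = i then 1 else Real.exp (-a * ∑ k ∈ Finset.Ioc i j, stepSize SΔ (x k t))) := by
        rw [Finset.mul_sum]
        apply Finset.sum_congr rfl
        intro i _
        unfold hiddenAttn
        by_cases hji : j = i
        · subst hji
          rw [if_pos rfl, if_pos rfl]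
          ring
        · rw [if_neg hji, if_neg hji]
          ring
      exact heq ▸ hode j t ht
  -- continuity on `[0, ∞)`
  have hcont : ∀ i : Fin L, ContinuousOn (x i) (Set.Ici 0) := by
    intro i t ht
    exact (hode i t ht).continuousAt.continuousWithinAt
  -- the squares are antitone
  have hanti : ∀ i : Fin L, AntitoneOn (fun t => x i t ^ 2) (Set.Ici 0) := by
    intro i
    apply antitoneOn_of_deriv_nonpos (convex_Ici 0)
    · exact (hcont i).pow 2
    · rw [interior_Ici]
      intro t ht
      obtain ⟨S, _, _, _, hd⟩ := hS i t ht.le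
      exact ((hd.pow 2)).differentiableAt.differentiableWithinAt
    · rw [interior_Ici]
      intro t ht
      obtain ⟨S, hS0, _, _, hd⟩ := hS i t ht.le
      rw [HasDerivAt.deriv (f := fun t => x i t ^ 2) (hd.pow 2)]
      have h1 : 0 ≤ S * x i t ^ 2 := mul_nonneg hS0 (sq_nonneg _)
      have h2 : (2:ℕ) - 1 = 1 := rfl
      rw [h2, pow_one]
      push_cast
      nlinarith
  have hsqle : ∀ (i : Fin L) (t : ℝ), 0 ≤ t → x i t ^ 2 ≤ x i 0 ^ 2 := by
    intro i t ht
    exact hanti i (Set.self_mem_Ici) ht ht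
  have habs : ∀ (i : Fin L) (t : ℝ), 0 ≤ t → |x i t| ≤ |x i 0| := by
    intro i t ht
    have h := hsqle i t ht
    nlinarith [abs_nonneg (x i t), abs_nonneg (x i 0), sq_abs (x i t), sq_abs (x i 0)]
  -- step size bounds along the trajectory
  have hub : ∀ (i : Fin L) (t : ℝ), 0 ≤ t → stepSize SΔ (x i t) ≤ ubΔ SΔ |x i 0| :=
    fun i t ht => stepSize_le_ubΔ _ _ _ (habs i t ht)
  have hlb : ∀ (i : Fin L) (t : ℝ), 0 ≤ t → lbΔ SΔ |x i 0| ≤ stepSize SΔ (x i t) :=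
    fun i t ht => lbΔ_le_stepSize _ _ _ (habs i t ht)
  -- positivity of the squares
  have hxpos : ∀ (i : Fin L) (t : ℝ), 0 ≤ t → 0 < x i t ^ 2 := by
    intro i t ht
    set B : ℝ := ∑ k ∈ Finset.Iic i, x k 0 ^ 2 * ubΔ SΔ |x k 0| with hB
    have hBnn : 0 ≤ B := Finset.sum_nonneg fun k _ => by
      have : 0 < ubΔ SΔ |x k 0| := by
        unfold ubΔ; apply Real.log_pos; linarith [Real.exp_pos (|SΔ| * |x k 0|)]
      positivity
    set β : ℝ := -(2 * μ * B) with hβ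
    have hβnn : 0 ≤ β := by
      rw [hβ]; nlinarith
    have hmono : MonotoneOn (fun s => x i s ^ 2 * Real.exp (β * s)) (Set.Ici 0) := by
      apply monotoneOn_of_deriv_nonneg (convex_Ici 0)
      · exact ((hcont i).pow 2).mul (Real.continuous_exp.comp (continuous_const.mul continuous_id)).continuousOn
      · rw [interior_Ici]
        intro s hs
        obtain ⟨S, _, _, _, hd⟩ := hS i s hs.le
        have hlin : HasDerivAt (fun y : ℝ => β * y) β s := by
          simpa using (hasDerivAt_id s).const_mul β
        exact ((hd.pow 2).mul hlin.exp).differentiableAt.differentiableWithinAt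
      · rw [interior_Ici]
        intro s hs
        obtain ⟨S, hS0, _, hSle, hd⟩ := hS i s hs.le
        have hlin : HasDerivAt (fun y : ℝ => β * y) β s := by
          simpa using (hasDerivAt_id s).const_mul β
        have hd2 := (hd.pow 2).mul hlin.exp
        have h21 : (2:ℕ) - 1 = 1 := rfl
        rw [h21, pow_one] at hd2
        rw [HasDerivAt.deriv (f := fun s => x i s ^ 2 * Real.exp (β * s)) hd2, Pi.pow_apply]
        push_cast
        have hSB : S ≤ B := by
          refine le_trans hSle ?_
          rw [hB]
          apply Finset.sum_le_sum
          intro k _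
          exact mul_le_mul (hsqle k s hs.le) (hub k s hs.le) (stepSize_pos _ _).le (sq_nonneg _)
        have hkey : 0 ≤ 2 * μ * S + β := by
          rw [hβ]
          nlinarith
        have hexp := (Real.exp_pos (β * s)).le
        nlinarith [mul_nonneg (mul_nonneg hkey (sq_nonneg (x i s))) hexp]
    have h0 : x i 0 ^ 2 * Real.exp (β * 0) ≤ x i t ^ 2 * Real.exp (β * t) :=
      hmono Set.self_mem_Ici ht ht
    have hx0 : 0 < x i 0 ^ 2 := by
      have := hinit i
      positivity
    simp only [mul_zero, Real.exp_zero, mul_one] at h0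
    nlinarith [Real.exp_pos (β * t)]
  -- the quantitative decay
  have hdecay : ∀ (j : Fin L) (t : ℝ), 0 < t →
      x j t ^ 2 ≤ ((-(2 * μ * lbΔ SΔ |x j 0|)) * t)⁻¹ := by
    intro j t ht
    set b : ℝ := -(2 * μ * lbΔ SΔ |x j 0|) with hb
    have hbpos : 0 < b := by
      rw [hb]; nlinarith [lbΔ_pos SΔ |x j 0|]
    have hmono : MonotoneOn (fun s => (x j s ^ 2)⁻¹ - b * s) (Set.Ici 0) := by
      apply monotoneOn_of_deriv_nonneg (convex_Ici 0)
      · apply ContinuousOn.sub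
        · exact ContinuousOn.inv₀ ((hcont j).pow 2) (fun s hs => (hxpos j s hs).ne')
        · exact (continuous_const.mul continuous_id).continuousOn
      · rw [interior_Ici]
        intro s hs
        obtain ⟨S, _, _, _, hd⟩ := hS j s hs.le
        have hlin : HasDerivAt (fun y : ℝ => b * y) b s := by
          simpa using (hasDerivAt_id s).const_mul b
        exact (((hd.pow 2).inv (hxpos j s hs.le).ne').sub
          hlin).differentiableAt.differentiableWithinAt
      · rw [interior_Ici]
        intro s hs
        obtain ⟨S, hS0, hSlow, _, hd⟩ := hS j s hs.le
        have hlin : HasDerivAt (fun y : ℝ => b * y) b s := by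
          simpa using (hasDerivAt_id s).const_mul b
        have hd2 := ((hd.pow 2).inv (hxpos j s hs.le).ne').sub hlin
        have h21 : (2:ℕ) - 1 = 1 := rfl
        rw [h21, pow_one] at hd2
        rw [HasDerivAt.deriv (f := fun s => (x j s ^ 2)⁻¹ - b * s) hd2, Pi.pow_apply]
        push_cast
        have hP : 0 < x j s ^ 2 := hxpos j s hs.le
        have h1 : lbΔ SΔ |x j 0| * x j s ^ 2 ≤ S := by
          calc lbΔ SΔ |x j 0| * x j s ^ 2 ≤ stepSize SΔ (x j s) * x j s ^ 2 :=
                mul_le_mul_of_nonneg_right (hlb j s hs.le) (sq_nonneg _)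
          _ = x j s ^ 2 * stepSize SΔ (x j s) := mul_comm _ _
          _ ≤ S := hSlow
        have h2 : b * (x j s ^ 2) ^ 2 ≤ -(2 * μ * x j s ^ 2 * S) := by
          rw [hb]
          nlinarith [mul_le_mul_of_nonneg_left h1 (mul_nonneg (by linarith : (0:ℝ) ≤ -(2*μ)) hP.le)]
        rw [sub_nonneg, le_div_iff₀ (by positivity : (0:ℝ) < (x j s ^ 2) ^ 2)]
        nlinarith [h2]
    have h0 : (x j 0 ^ 2)⁻¹ - b * 0 ≤ (x j t ^ 2)⁻¹ - b * t :=
      hmono Set.self_mem_Ici ht.le ht.le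
    have hx0 : 0 < (x j 0 ^ 2)⁻¹ := by
      have := hinit j
      positivity
    have hbt : b * t ≤ (x j t ^ 2)⁻¹ := by
      simp only [mul_zero, sub_zero] at h0
      linarith
    have hbtpos : 0 < b * t := mul_pos hbpos ht
    calc x j t ^ 2 = ((x j t ^ 2)⁻¹)⁻¹ := (inv_inv _).symm
    _ ≤ (b * t)⁻¹ := by
        apply inv_anti₀ hbtpos hbt
  -- conclusion
  intro l j hjl
  set bl : ℝ := -(2 * μ * lbΔ SΔ |x l 0|) with hbl
  set bj : ℝ := -(2 * μ * lbΔ SΔ |x j 0|) with hbj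
  have hblpos : 0 < bl := by rw [hbl]; nlinarith [lbΔ_pos SΔ |x l 0|]
  have hbjpos : 0 < bj := by rw [hbj]; nlinarith [lbΔ_pos SΔ |x j 0|]
  have hubjpos : 0 < ubΔ SΔ |x j 0| := by
    unfold ubΔ; apply Real.log_pos; linarith [Real.exp_pos (|SΔ| * |x j 0|)]
  have hublpos : 0 < ubΔ SΔ |x l 0| := by
    unfold ubΔ; apply Real.log_pos; linarith [Real.exp_pos (|SΔ| * |x l 0|)]
  have hμabs : 0 < |μ| := abs_pos.2 (ne_of_lt hμ)
  by_cases hlj : l = j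
  · subst hlj
    refine ⟨|μ| * ubΔ SΔ |x l 0| / bl,
      div_pos (mul_pos hμabs hublpos) hblpos, ?_⟩
    intro t ht
    have ht0 : (0:ℝ) < t := lt_of_lt_of_le one_pos ht
    have hdec := hdecay l t ht0
    rw [hiddenAttn, if_pos rfl]
    have habseq : |μ * x l t ^ 2 * stepSize SΔ (x l t)|
        = |μ| * (x l t ^ 2 * stepSize SΔ (x l t)) := by
      rw [abs_mul, abs_mul, abs_of_nonneg (sq_nonneg (x l t)),
        abs_of_nonneg (stepSize_pos SΔ (x l t)).le]
      ring
    rw [habseq]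
    have key : x l t ^ 2 * stepSize SΔ (x l t) ≤ (bl * t)⁻¹ * ubΔ SΔ |x l 0| :=
      mul_le_mul hdec (hub l t ht0.le) (stepSize_pos _ _).le
        (inv_nonneg.2 (mul_pos hblpos ht0).le)
    calc |μ| * (x l t ^ 2 * stepSize SΔ (x l t))
        ≤ |μ| * ((bl * t)⁻¹ * ubΔ SΔ |x l 0|) :=
          mul_le_mul_of_nonneg_left key (abs_nonneg μ)
    _ = |μ| * ubΔ SΔ |x l 0| / bl / t := by
          field_simp
  · refine ⟨|μ| * ((bl⁻¹ + bj⁻¹) / 2) * ubΔ SΔ |x j 0|,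
      mul_pos (mul_pos hμabs
        (div_pos (add_pos (inv_pos.2 hblpos) (inv_pos.2 hbjpos)) two_pos)) hubjpos, ?_⟩
    intro t ht
    have ht0 : (0:ℝ) < t := lt_of_lt_of_le one_pos ht
    have hdecl := hdecay l t ht0
    have hdecj := hdecay j t ht0
    rw [hiddenAttn, if_neg hlj]
    have hxl : |x l t| * |x j t| ≤ ((bl⁻¹ + bj⁻¹) / 2) / t := by
      have hm : |x l t| * |x j t| ≤ (x l t ^ 2 + x j t ^ 2) / 2 := by
        nlinarith [sq_nonneg (|x l t| - |x j t|), sq_abs (x l t), sq_abs (x j t)]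
      have h1 : (bl * t)⁻¹ = bl⁻¹ / t := by rw [mul_inv]; ring
      have h2 : (bj * t)⁻¹ = bj⁻¹ / t := by rw [mul_inv]; ring
      rw [h1] at hdecl; rw [h2] at hdecj
      calc |x l t| * |x j t| ≤ (x l t ^ 2 + x j t ^ 2) / 2 := hm
      _ ≤ (bl⁻¹ / t + bj⁻¹ / t) / 2 := by linarith
      _ = ((bl⁻¹ + bj⁻¹) / 2) / t := by ring
    have hxlnn : 0 ≤ ((bl⁻¹ + bj⁻¹) / 2) / t :=
      div_nonneg (div_nonneg (by positivity) two_pos.le) ht0.le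
    have hexp : Real.exp (-a * ∑ k ∈ Finset.Ioc j l, stepSize SΔ (x k t)) ≤ 1 := by
      rw [Real.exp_le_one_iff]
      have hsum : 0 ≤ ∑ k ∈ Finset.Ioc j l, stepSize SΔ (x k t) :=
        Finset.sum_nonneg fun k _ => (stepSize_pos _ _).le
      nlinarith
    have habseq : |μ * x l t * x j t * stepSize SΔ (x j t) *
        Real.exp (-a * ∑ k ∈ Finset.Ioc j l, stepSize SΔ (x k t))|
        = |μ| * (|x l t| * |x j t|) * stepSize SΔ (x j t) *
          Real.exp (-a * ∑ k ∈ Finset.Ioc j l, stepSize SΔ (x k t)) := by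
      rw [abs_mul, abs_mul, abs_mul, abs_mul,
        abs_of_nonneg (stepSize_pos SΔ (x j t)).le, abs_of_nonneg (Real.exp_pos _).le]
      ring
    rw [habseq]
    calc |μ| * (|x l t| * |x j t|) * stepSize SΔ (x j t) *
          Real.exp (-a * ∑ k ∈ Finset.Ioc j l, stepSize SΔ (x k t))
        ≤ |μ| * (|x l t| * |x j t|) * stepSize SΔ (x j t) * 1 := by
          apply mul_le_mul_of_nonneg_left hexp
          exact mul_nonneg (mul_nonneg (abs_nonneg μ)
            (mul_nonneg (abs_nonneg _) (abs_nonneg _))) (stepSize_pos _ _).le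
    _ = |μ| * (|x l t| * |x j t|) * stepSize SΔ (x j t) := mul_one _
    _ ≤ |μ| * (((bl⁻¹ + bj⁻¹) / 2) / t) * ubΔ SΔ |x j 0| :=
          mul_le_mul (mul_le_mul_of_nonneg_left hxl (abs_nonneg μ))
            (hub j t ht0.le) (stepSize_pos _ _).le
            (mul_nonneg (abs_nonneg μ) hxlnn)
    _ = |μ| * ((bl⁻¹ + bj⁻¹) / 2) * ubΔ SΔ |x j 0| / t := by ring
end

section
/- In the one-dimensional Mamba dynamics with μ = S_C^⊤S_B > 0 and S_Δ x_{l0} < 0 for all l, each token x_l(t) is globally defined on [0,∞), has constant sign equal to the sign of x_{l0}, is monotone, and |x_l(t)| → ∞ as t → ∞. -/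
lemma stepSize_le_exp (SΔ u : ℝ) : stepSize SΔ u ≤ Real.exp (SΔ * u) := by
  unfold stepSize
  have h := Real.log_le_sub_one_of_pos (x := 1 + Real.exp (SΔ*u)) (by positivity)
  linarith

lemma continuous_stepSize (SΔ : ℝ) : Continuous (stepSize SΔ) := by
  have h : Continuous fun u => 1 + Real.exp (SΔ * u) := by continuity
  rw [continuous_iff_continuousAt]
  intro u
  exact (Real.continuousAt_log (by positivity)).comp h.continuousAt

lemma sq_le_four_mul_exp (s : ℝ) (hs : 0 ≤ s) : s^2 ≤ 4 * Real.exp s := by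
  have h1 : s/2 + 1 ≤ Real.exp (s/2) := Real.add_one_le_exp _
  have h2 : Real.exp (s/2) * Real.exp (s/2) = Real.exp s := by
    rw [← Real.exp_add]; ring_nf
  nlinarith [Real.exp_pos (s/2)]

lemma sq_mul_stepSize_le (SΔ u : ℝ) (h : SΔ * u < 0) : u^2 * stepSize SΔ u ≤ 4 / SΔ^2 := by
  have hS : SΔ ≠ 0 := by rintro rfl; simp at h
  have h1 : stepSize SΔ u ≤ Real.exp (SΔ * u) := stepSize_le_exp _ _
  have h2 : u^2 * stepSize SΔ u ≤ u^2 * Real.exp (SΔ*u) := by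
    nlinarith [sq_nonneg u, stepSize_pos SΔ u]
  refine h2.trans ?_
  set s := -(SΔ * u) with hs
  have hs0 : 0 ≤ s := by simp only [hs]; linarith
  have hu2 : u^2 = s^2 / SΔ^2 := by
    field_simp [hs]
    ring
  have h3 : s^2 ≤ 4 * Real.exp s := sq_le_four_mul_exp s hs0
  have h4 : s^2 * (Real.exp s)⁻¹ ≤ 4 := by
    rw [← div_eq_mul_inv, div_le_iff₀ (Real.exp_pos s)]; linarith
  rw [hu2, show SΔ*u = -s by rw [hs]; ring, Real.exp_neg]
  calc s^2/SΔ^2 * (Real.exp s)⁻¹ = (s^2 * (Real.exp s)⁻¹)/SΔ^2 := by ring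
  _ ≤ 4 / SΔ^2 := by gcongr

lemma mono_aux {f f' : ℝ → ℝ} {s : Set ℝ} (hs : Convex ℝ s)
    (hf : ∀ t ∈ s, HasDerivAt f (f' t) t) (h0 : ∀ t ∈ s, 0 ≤ f' t) :
    MonotoneOn f s := by
  refine monotoneOn_of_deriv_nonneg hs (fun t ht => (hf t ht).continuousAt.continuousWithinAt)
    (fun t ht => ((hf t (interior_subset ht)).differentiableAt).differentiableWithinAt) ?_
  intro t ht
  rw [(hf t (interior_subset ht)).deriv]
  exact h0 t (interior_subset ht)

lemma anti_aux {f f' : ℝ → ℝ} {s : Set ℝ} (hs : Convex ℝ s)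
    (hf : ∀ t ∈ s, HasDerivAt f (f' t) t) (h0 : ∀ t ∈ s, f' t ≤ 0) :
    AntitoneOn f s := by
  refine antitoneOn_of_deriv_nonpos hs (fun t ht => (hf t ht).continuousAt.continuousWithinAt)
    (fun t ht => ((hf t (interior_subset ht)).differentiableAt).differentiableWithinAt) ?_
  intro t ht
  rw [(hf t (interior_subset ht)).deriv]
  exact h0 t (interior_subset ht)

noncomputable def gcoef {L : ℕ} (μ SΔ a : ℝ) (x : Fin L → ℝ → ℝ) (l : Fin L) (t : ℝ) : ℝ :=
  μ * x l t ^ 2 * stepSize SΔ (x l t) +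
    ∑ j ∈ Finset.Iio l, μ * x j t ^ 2 * stepSize SΔ (x j t) *
      Real.exp (-a * ∑ k ∈ Finset.Ioc j l, stepSize SΔ (x k t))

lemma gcoef_ge {L : ℕ} (μ SΔ a : ℝ) (hμ : 0 < μ) (x : Fin L → ℝ → ℝ) (l : Fin L) (t : ℝ) :
    μ * x l t ^ 2 * stepSize SΔ (x l t) ≤ gcoef μ SΔ a x l t := by
  unfold gcoef
  refine le_add_of_nonneg_right (Finset.sum_nonneg fun j _ => ?_)
  have h1 := stepSize_pos SΔ (x j t)
  have h2 : 0 ≤ ∑ k ∈ Finset.Ioc j l, stepSize SΔ (x k t) :=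
    Finset.sum_nonneg fun k _ => (stepSize_pos SΔ _).le
  positivity

lemma gcoef_nonneg {L : ℕ} (μ SΔ a : ℝ) (hμ : 0 < μ) (x : Fin L → ℝ → ℝ) (l : Fin L) (t : ℝ) :
    0 ≤ gcoef μ SΔ a x l t :=
  le_trans (by have := stepSize_pos SΔ (x l t); positivity) (gcoef_ge μ SΔ a hμ x l t)

lemma sum_eq {L : ℕ} (μ SΔ a : ℝ) (x : Fin L → ℝ → ℝ) (l : Fin L) (t : ℝ) :
    ∑ j ∈ Finset.Iic l, hiddenAttn μ SΔ a x l j t * x j t = gcoef μ SΔ a x l t * x l t := by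
  have h : Finset.Iic l = insert l (Finset.Iio l) := (Finset.Iio_insert l).symm
  rw [h, Finset.sum_insert (by simp)]
  unfold hiddenAttn gcoef
  rw [if_pos rfl, add_mul, Finset.sum_mul]
  congr 1
  refine Finset.sum_congr rfl fun j hj => ?_
  rw [Finset.mem_Iio] at hj
  rw [if_neg (by rintro rfl; exact absurd hj (lt_irrefl _))]
  ring

lemma gcoef_continuousOn {L : ℕ} (μ SΔ a : ℝ) (x : Fin L → ℝ → ℝ) (l : Fin L) (s : Set ℝ)
    (hx : ∀ j, ContinuousOn (x j) s) : ContinuousOn (gcoef μ SΔ a x l) s := by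
  unfold gcoef
  apply ContinuousOn.add
  · exact (continuousOn_const.mul ((hx l).pow 2)).mul
      ((continuous_stepSize SΔ).comp_continuousOn (hx l))
  · apply continuousOn_finset_sum
    intro j _
    refine ((continuousOn_const.mul ((hx j).pow 2)).mul
      ((continuous_stepSize SΔ).comp_continuousOn (hx j))).mul ?_
    apply Real.continuous_exp.comp_continuousOn
    exact continuousOn_const.mul (continuousOn_finset_sum _ fun k _ =>
      (continuous_stepSize SΔ).comp_continuousOn (hx k))

lemma gcoef_le {L : ℕ} {μ SΔ a : ℝ} (hμ : 0 < μ) (ha : 0 < a) {x : Fin L → ℝ → ℝ} {t : ℝ}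
    (hneg : ∀ j : Fin L, SΔ * x j t < 0) (l : Fin L) :
    gcoef μ SΔ a x l t ≤ (1 + L) * (μ * (4 / SΔ ^ 2)) := by
  have key : ∀ j : Fin L, μ * x j t ^2 * stepSize SΔ (x j t) ≤ μ * (4 / SΔ^2) := by
    intro j
    have h := sq_mul_stepSize_le SΔ (x j t) (hneg j)
    calc μ * x j t ^2 * stepSize SΔ (x j t) = μ * (x j t^2 * stepSize SΔ (x j t)) := by ring
    _ ≤ μ * (4 / SΔ^2) := mul_le_mul_of_nonneg_left h hμ.le
  unfold gcoef
  have hsum : ∑ j ∈ Finset.Iio l, μ * x j t ^ 2 * stepSize SΔ (x j t) *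
      Real.exp (-a * ∑ k ∈ Finset.Ioc j l, stepSize SΔ (x k t)) ≤ (L:ℝ) * (μ * (4/SΔ^2)) := by
    have hterm : ∀ j ∈ Finset.Iio l, μ * x j t ^ 2 * stepSize SΔ (x j t) *
        Real.exp (-a * ∑ k ∈ Finset.Ioc j l, stepSize SΔ (x k t)) ≤ μ * (4/SΔ^2) := by
      intro j _
      have hsum0 : 0 ≤ ∑ k ∈ Finset.Ioc j l, stepSize SΔ (x k t) :=
        Finset.sum_nonneg fun k _ => (stepSize_pos SΔ _).le
      have hexp : Real.exp (-a * ∑ k ∈ Finset.Ioc j l, stepSize SΔ (x k t)) ≤ 1 := by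
        rw [Real.exp_le_one_iff]
        nlinarith
      have h1 : 0 ≤ μ * x j t ^2 * stepSize SΔ (x j t) := by
        have := stepSize_pos SΔ (x j t); positivity
      calc μ * x j t ^ 2 * stepSize SΔ (x j t) *
          Real.exp (-a * ∑ k ∈ Finset.Ioc j l, stepSize SΔ (x k t))
          ≤ μ * x j t ^2 * stepSize SΔ (x j t) * 1 := mul_le_mul_of_nonneg_left hexp h1
      _ = μ * x j t ^2 * stepSize SΔ (x j t) := mul_one _
      _ ≤ _ := key j
    calc ∑ j ∈ Finset.Iio l, μ * x j t ^ 2 * stepSize SΔ (x j t) *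
        Real.exp (-a * ∑ k ∈ Finset.Ioc j l, stepSize SΔ (x k t))
        ≤ (Finset.Iio l).card • (μ * (4/SΔ^2)) := Finset.sum_le_card_nsmul _ _ _ hterm
    _ = ((Finset.Iio l).card : ℝ) * (μ * (4/SΔ^2)) := nsmul_eq_mul _ _
    _ ≤ (L:ℝ) * (μ * (4/SΔ^2)) := by
        have hc : ((Finset.Iio l).card : ℝ) ≤ (L:ℝ) := by
          have := Finset.card_le_univ (Finset.Iio l)
          simp only [Finset.card_univ, Fintype.card_fin] at this
          exact_mod_cast this
        have hB : (0:ℝ) ≤ μ * (4/SΔ^2) := by positivity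
        exact mul_le_mul_of_nonneg_right hc hB
  have hk := key l
  nlinarith [hk, hsum]

/-- Slow-divergence scenario: in the one-dimensional Mamba dynamics with
`μ = S_C^⊤S_B > 0` and `S_Δ·x_{l0} < 0` for all `l`, each token is globally defined,
keeps the sign of its initial value, `|x_l|` is monotone, and `|x_l(t)| → ∞`. -/
theorem stmt14 (L : ℕ) (μ SΔ a : ℝ) (hμ : 0 < μ) (ha : 0 < a)
    (x : Fin L → ℝ → ℝ) (hinit : ∀ l : Fin L, SΔ * x l 0 < 0)
    (T : EReal) (hT : 0 < T)
    (hode : ∀ (l : Fin L) (t : ℝ), 0 ≤ t → (t : EReal) < T →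
      HasDerivAt (x l) (∑ j ∈ Finset.Iic l, hiddenAttn μ SΔ a x l j t * x j t) t)
    (hmax : T ≠ ⊤ →
      ¬ ∃ M : ℝ, ∀ (l : Fin L) (t : ℝ), 0 ≤ t → (t : EReal) < T → |x l t| ≤ M) :
    T = ⊤ ∧
      (∀ (l : Fin L) (t : ℝ), 0 ≤ t →
        (0 < x l 0 → 0 < x l t) ∧ (x l 0 < 0 → x l t < 0)) ∧
      (∀ l : Fin L, MonotoneOn (fun t => |x l t|) (Set.Ici 0)) ∧
      (∀ l : Fin L,
        Filter.Tendsto (fun t => |x l t|) Filter.atTop Filter.atTop) := by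
  have hode2 : ∀ (l : Fin L) (t : ℝ), 0 ≤ t → (t : EReal) < T →
      HasDerivAt (x l) (gcoef μ SΔ a x l t * x l t) t := by
    intro l t ht htT
    have h := hode l t ht htT
    rwa [sum_eq] at h
  have hsub : ∀ t₁ : ℝ, (t₁ : EReal) < T → ∀ t ∈ Set.Icc (0:ℝ) t₁, 0 ≤ t ∧ (t:EReal) < T := by
    intro t₁ ht₁ t ht
    exact ⟨ht.1, lt_of_le_of_lt (EReal.coe_le_coe_iff.2 ht.2) ht₁⟩
  have hcontOn : ∀ (t₁ : ℝ), (t₁ : EReal) < T → ∀ j, ContinuousOn (x j) (Set.Icc 0 t₁) := by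
    intro t₁ ht₁ j t ht
    obtain ⟨h1, h2⟩ := hsub t₁ ht₁ t ht
    exact (hode2 j t h1 h2).continuousAt.continuousWithinAt
  have hx0 : ∀ l, x l 0 ≠ 0 := by
    intro l h
    have h2 := hinit l
    rw [h, mul_zero] at h2
    exact lt_irrefl _ h2
  -- sign preservation on [0, T)
  have hsign : ∀ (l : Fin L) (t : ℝ), 0 ≤ t → (t : EReal) < T → 0 < x l t * x l 0 := by
    intro l t₁ ht₁ hT₁
    by_contra hcon
    push_neg at hcon
    obtain ⟨t₂, ht₂m, ht₂z⟩ : ∃ t₂ ∈ Set.Icc (0:ℝ) t₁, x l t₂ * x l 0 = 0 := by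
      have hcont : ContinuousOn (fun t => x l t * x l 0) (Set.Icc 0 t₁) :=
        (hcontOn t₁ hT₁ l).mul continuousOn_const
      have hivt := intermediate_value_Icc' ht₁ hcont
      have h0mem : (0:ℝ) ∈ Set.Icc (x l t₁ * x l 0) (x l 0 * x l 0) :=
        ⟨hcon, mul_self_nonneg _⟩
      obtain ⟨t₂, ht₂, h⟩ := hivt h0mem
      exact ⟨t₂, ht₂, h⟩
    have hz : x l t₂ = 0 := by
      rcases mul_eq_zero.1 ht₂z with h | h
      · exact h
      · exact absurd h (hx0 l)
    have ht₂T : (t₂ : EReal) < T := (hsub t₁ hT₁ t₂ ht₂m).2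
    have ht₂0 : 0 ≤ t₂ := ht₂m.1
    obtain ⟨K, hK⟩ := (isCompact_Icc : IsCompact (Set.Icc (0:ℝ) t₂)).exists_bound_of_continuousOn
      (gcoef_continuousOn μ SΔ a x l _ (hcontOn t₂ ht₂T))
    have hmono : MonotoneOn (fun t => x l t ^ 2 * Real.exp (2*K*t)) (Set.Icc 0 t₂) := by
      apply mono_aux (convex_Icc _ _) (f' := fun t =>
        (2 * x l t ^ 1 * (gcoef μ SΔ a x l t * x l t)) * Real.exp (2*K*t)
          + x l t ^ 2 * (Real.exp (2*K*t) * (2*K)))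
      · intro t ht
        obtain ⟨h1, h2⟩ := hsub t₂ ht₂T t ht
        have hd1 := (hode2 l t h1 h2).pow 2
        have hd2 : HasDerivAt (fun t : ℝ => Real.exp (2*K*t)) (Real.exp (2*K*t) * (2*K*1)) t :=
          ((hasDerivAt_id t).const_mul (2*K)).exp
        have hd := hd1.mul hd2
        exact hd.congr_deriv (by push_cast [Pi.pow_apply]; ring)
      · intro t ht
        have hKt : |gcoef μ SΔ a x l t| ≤ K := by simpa using hK _ ht
        have h1 := abs_le.1 hKt
        have he := Real.exp_pos (2*K*t)
        nlinarith [sq_nonneg (x l t), mul_nonneg (sq_nonneg (x l t)) he.le]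
    have h0m : (0:ℝ) ∈ Set.Icc (0:ℝ) t₂ := ⟨le_refl _, ht₂0⟩
    have ht₂me : t₂ ∈ Set.Icc (0:ℝ) t₂ := ⟨ht₂0, le_refl _⟩
    have hfin : x l 0 ^ 2 * Real.exp (2*K*0) ≤ x l t₂ ^ 2 * Real.exp (2*K*t₂) :=
      hmono h0m ht₂me ht₂0
    rw [hz] at hfin
    simp only [mul_zero, Real.exp_zero, mul_one, ne_eq, OfNat.ofNat_ne_zero,
      not_false_eq_true, zero_pow, zero_mul] at hfin
    have hpos : 0 < x l 0 ^ 2 := by have := hx0 l; positivity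
    linarith
  have hneg : ∀ (l : Fin L) (t : ℝ), 0 ≤ t → (t:EReal) < T → SΔ * x l t < 0 := by
    intro l t ht htT
    have h1 := hsign l t ht htT
    have h2 := hinit l
    have hS : SΔ ≠ 0 := fun h => by rw [h, zero_mul] at h2; exact lt_irrefl _ h2
    by_contra hge
    push_neg at hge
    have hs2 : 0 < SΔ^2 := by positivity
    nlinarith [mul_pos hs2 h1, mul_nonneg hge (le_of_lt (neg_pos.2 h2))]
  -- global existence
  have hTtop : T = ⊤ := by
    by_contra hne
    apply hmax hne
    rcases Nat.eq_zero_or_pos L with hL | hL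
    · subst hL
      exact ⟨0, fun l => l.elim0⟩
    · have hbot : T ≠ ⊥ := ne_bot_of_gt hT
      have hTe : (T.toReal : EReal) = T := EReal.coe_toReal hne hbot
      obtain ⟨C, hC0, hCb⟩ : ∃ C : ℝ, 0 ≤ C ∧ ∀ (l : Fin L) (u : ℝ), 0 ≤ u → (u:EReal) < T →
          gcoef μ SΔ a x l u ≤ C := by
        have hS : SΔ ≠ 0 := by
          intro h
          have h2 := hinit ⟨0, hL⟩
          rw [h, zero_mul] at h2
          exact lt_irrefl _ h2
        exact ⟨(1 + (L:ℝ)) * (μ * (4 / SΔ ^ 2)), by positivity,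
          fun l u h1 h2 => gcoef_le hμ ha (fun j => hneg j u h1 h2) l⟩
      have hbd : ∀ (l : Fin L) (t : ℝ), 0 ≤ t → (t:EReal) < T →
          |x l t| ≤ |x l 0| * Real.exp (C * t) := by
        intro l t ht htT
        have hanti : AntitoneOn (fun u => x l u ^2 * Real.exp (-(2*C)*u)) (Set.Icc 0 t) := by
          apply anti_aux (convex_Icc _ _) (f' := fun u =>
            (2 * x l u ^ 1 * (gcoef μ SΔ a x l u * x l u)) * Real.exp (-(2*C)*u)
              + x l u ^2 * (Real.exp (-(2*C)*u) * (-(2*C)*1)))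
          · intro u hu
            obtain ⟨h1, h2⟩ := hsub t htT u hu
            have hd1 := (hode2 l u h1 h2).pow 2
            have hd2 : HasDerivAt (fun u : ℝ => Real.exp (-(2*C)*u))
                (Real.exp (-(2*C)*u) * (-(2*C)*1)) u :=
              ((hasDerivAt_id u).const_mul (-(2*C))).exp
            have hd := hd1.mul hd2
            exact hd.congr_deriv (by push_cast [Pi.pow_apply]; ring)
          · intro u hu
            obtain ⟨h1, h2⟩ := hsub t htT u hu
            have hgl : gcoef μ SΔ a x l u ≤ C := hCb l u h1 h2
            have he := Real.exp_pos (-(2*C)*u)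
            nlinarith [sq_nonneg (x l u), mul_nonneg (sq_nonneg (x l u)) he.le]
        have h1 := hanti (Set.left_mem_Icc.2 ht) (Set.right_mem_Icc.2 ht) ht
        simp only [mul_zero, Real.exp_zero, mul_one] at h1
        have hE := Real.exp_pos (2*C*t)
        have hmulinv : Real.exp (-(2*C)*t) * Real.exp (2*C*t) = 1 := by
          rw [← Real.exp_add, show -(2*C)*t + 2*C*t = 0 by ring, Real.exp_zero]
        have hsq : (Real.exp (C*t))^2 = Real.exp (2*C*t) := by
          rw [sq, ← Real.exp_add]; ring_nf
        have hxt2 : x l t ^2 ≤ (|x l 0| * Real.exp (C*t))^2 := by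
          rw [mul_pow, sq_abs, hsq]
          nlinarith [mul_le_mul_of_nonneg_right h1 hE.le, hmulinv]
        calc |x l t| = Real.sqrt (x l t ^2) := (Real.sqrt_sq_eq_abs _).symm
        _ ≤ Real.sqrt ((|x l 0| * Real.exp (C*t))^2) := Real.sqrt_le_sqrt hxt2
        _ = |x l 0| * Real.exp (C*t) := Real.sqrt_sq (by positivity)
      obtain ⟨M₀, hM₀⟩ : ∃ M₀ : ℝ, ∀ l : Fin L, |x l 0| ≤ M₀ := Finite.exists_le _
      refine ⟨M₀ * Real.exp (C * T.toReal), fun l t ht htT => ?_⟩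
      have htTr : t ≤ T.toReal := by
        rw [← hTe] at htT
        exact_mod_cast htT.le
      have h2 : Real.exp (C*t) ≤ Real.exp (C*T.toReal) :=
        Real.exp_le_exp.2 (mul_le_mul_of_nonneg_left htTr hC0)
      calc |x l t| ≤ |x l 0| * Real.exp (C*t) := hbd l t ht htT
      _ ≤ M₀ * Real.exp (C*T.toReal) :=
        mul_le_mul (hM₀ l) h2 (Real.exp_pos _).le ((abs_nonneg _).trans (hM₀ l))
  subst hTtop
  have htop : ∀ t : ℝ, (t : EReal) < ⊤ := fun t => EReal.coe_lt_top t
  have hmono2 : ∀ l : Fin L, MonotoneOn (fun t => x l t ^ 2) (Set.Ici 0) := by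
    intro l
    apply mono_aux (convex_Ici 0) (f' := fun t => 2 * x l t ^ 1 * (gcoef μ SΔ a x l t * x l t))
    · intro t ht
      have hd := (hode2 l t ht (htop t)).pow 2
      exact hd.congr_deriv (by push_cast [Pi.pow_apply]; ring)
    · intro t ht
      have hg := gcoef_nonneg μ SΔ a hμ x l t
      nlinarith [mul_nonneg hg (sq_nonneg (x l t))]
  refine ⟨rfl, ?_, ?_, ?_⟩
  · intro l t ht
    have h := hsign l t ht (htop t)
    constructor
    · intro h0; nlinarith
    · intro h0; nlinarith
  · intro l s hs t ht hst
    simp only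
    rw [← Real.sqrt_sq_eq_abs, ← Real.sqrt_sq_eq_abs]
    exact Real.sqrt_le_sqrt (hmono2 l hs ht hst)
  · intro l
    rw [Filter.tendsto_atTop]
    intro b
    obtain ⟨t₀, ht₀, hbt₀⟩ : ∃ t₀ : ℝ, 0 ≤ t₀ ∧ b ≤ |x l t₀| := by
      by_contra hcon
      push_neg at hcon
      have hb0 : 0 < b := lt_of_le_of_lt (abs_nonneg _) (hcon 0 le_rfl)
      have hm0 : 0 < x l 0 ^ 2 := by have := hx0 l; positivity
      have hδ0 : 0 < Real.log (1 + Real.exp (-(|SΔ| * b))) :=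
        Real.log_pos (by have := Real.exp_pos (-(|SΔ| * b)); linarith)
      set δ := Real.log (1 + Real.exp (-(|SΔ| * b))) with hδ
      have hΔge : ∀ t : ℝ, 0 ≤ t → δ ≤ stepSize SΔ (x l t) := by
        intro t ht
        have hxb : |x l t| ≤ b := (hcon t ht).le
        have h1 : -(|SΔ| * b) ≤ SΔ * x l t := by
          have h2 : |SΔ * x l t| ≤ |SΔ| * b := by
            rw [abs_mul]
            exact mul_le_mul_of_nonneg_left hxb (abs_nonneg _)
          have h3 := neg_abs_le (SΔ * x l t)
          linarith
        rw [hδ]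
        unfold stepSize
        have h4 : Real.exp (-(|SΔ| * b)) ≤ Real.exp (SΔ * x l t) := Real.exp_le_exp.2 h1
        have h5 : (0:ℝ) < 1 + Real.exp (-(|SΔ| * b)) := by positivity
        apply Real.log_le_log h5
        linarith
      set ε := 2 * μ * (x l 0 ^2)^2 * δ with hε
      have hε0 : 0 < ε := by rw [hε]; positivity
      have hmono3 : MonotoneOn (fun t => x l t ^2 - ε * t) (Set.Ici 0) := by
        apply mono_aux (convex_Ici 0)
          (f' := fun t => 2 * x l t ^ 1 * (gcoef μ SΔ a x l t * x l t) - ε * 1)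
        · intro t ht
          have h1 := (hode2 l t ht (htop t)).pow 2
          have h2 := (hasDerivAt_id t).const_mul ε
          have hd := h1.sub h2
          exact hd.congr_deriv (by push_cast [Pi.pow_apply]; ring)
        · intro t ht
          have hge := gcoef_ge μ SΔ a hμ x l t
          have hΔ := hΔge t ht
          have hx2 : x l 0 ^2 ≤ x l t ^2 := hmono2 l Set.self_mem_Ici ht ht
          have hΔpos := stepSize_pos SΔ (x l t)
          rw [hε]
          nlinarith [mul_le_mul_of_nonneg_right hge (sq_nonneg (x l t)),
            mul_le_mul_of_nonneg_left
              (mul_le_mul (pow_le_pow_left₀ hm0.le hx2 2) hΔ hδ0.le (sq_nonneg (x l t ^2))) hμ.le]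
      have hT1 : (0:ℝ) ≤ b^2 / ε := by positivity
      have hgrow := hmono3 Set.self_mem_Ici (Set.mem_Ici.2 hT1) hT1
      simp only [mul_zero, sub_zero] at hgrow
      have hcanc : ε * (b^2/ε) = b^2 := by field_simp
      rw [hcanc] at hgrow
      have hlt : |x l (b^2/ε)| < b := hcon _ hT1
      nlinarith [sq_abs (x l (b^2/ε)), abs_nonneg (x l (b^2/ε))]
    refine Filter.eventually_atTop.2 ⟨t₀, fun t ht => ?_⟩
    have h2 : |x l t₀| ≤ |x l t| := by
      rw [← Real.sqrt_sq_eq_abs, ← Real.sqrt_sq_eq_abs]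
      exact Real.sqrt_le_sqrt (hmono2 l (Set.mem_Ici.2 ht₀) (Set.mem_Ici.2 (ht₀.trans ht)) ht)
    linarith
end

section
/- Under the slow-divergence assumptions (μ = S_C^⊤S_B > 0 and S_Δ x_{L0} ≤ … ≤ S_Δ x_{10} ≤ −r₀), each token of the one-dimensional Mamba dynamics satisfies |x_l(t)| = O((ln t)^l) as t → ∞. -/
open Set

private lemma monoOn_hasDeriv {f f' : ℝ → ℝ} {s : Set ℝ} (hs : Convex ℝ s)
    (hd : ∀ t ∈ s, HasDerivAt f (f' t) t) (h0 : ∀ t ∈ interior s, 0 ≤ f' t) :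
    MonotoneOn f s := by
  refine monotoneOn_of_deriv_nonneg hs (fun t ht => (hd t ht).continuousAt.continuousWithinAt)
    (fun t ht => ((hd t (interior_subset ht)).differentiableAt).differentiableWithinAt) ?_
  intro t ht
  rw [(hd t (interior_subset ht)).deriv]
  exact h0 t ht

private lemma antiOn_hasDeriv {f f' : ℝ → ℝ} {s : Set ℝ} (hs : Convex ℝ s)
    (hd : ∀ t ∈ s, HasDerivAt f (f' t) t) (h0 : ∀ t ∈ interior s, f' t ≤ 0) :
    AntitoneOn f s := by
  refine antitoneOn_of_deriv_nonpos hs (fun t ht => (hd t ht).continuousAt.continuousWithinAt)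
    (fun t ht => ((hd t (interior_subset ht)).differentiableAt).differentiableWithinAt) ?_
  intro t ht
  rw [(hd t (interior_subset ht)).deriv]
  exact h0 t ht

set_option maxHeartbeats 1600000

/-- Divergence rate in the slow-divergence scenario: if `μ > 0` and
`S_Δ·x_{L0} ≤ … ≤ S_Δ·x_{10} ≤ −r₀`, where `r₀` is the unique positive root of
`h(r) = 2ln(1+e^{−r}) − re^{−r}/(1+e^{−r})`, then the `l`-th token (1-based index
`l+1` for `l : Fin L`) satisfies `|x_l(t)| = O((ln t)^l)`. -/
theorem stmt16 (L : ℕ) (μ SΔ a r₀ : ℝ) (hμ : 0 < μ) (ha : 0 < a) (hr₀ : 0 < r₀)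
    (hroot : 2 * Real.log (1 + Real.exp (-r₀)) -
      r₀ * Real.exp (-r₀) / (1 + Real.exp (-r₀)) = 0)
    (huniq : ∀ r : ℝ, 0 < r →
      2 * Real.log (1 + Real.exp (-r)) -
        r * Real.exp (-r) / (1 + Real.exp (-r)) = 0 → r = r₀)
    (x : Fin L → ℝ → ℝ)
    (horder0 : ∀ j l : Fin L, j ≤ l → SΔ * x l 0 ≤ SΔ * x j 0)
    (hupper : ∀ l : Fin L, SΔ * x l 0 ≤ -r₀)
    (hode : ∀ (l : Fin L) (t : ℝ), 0 ≤ t →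
      HasDerivAt (x l) (∑ j ∈ Finset.Iic l, hiddenAttn μ SΔ a x l j t * x j t) t) :
    ∀ l : Fin L, ∃ C : ℝ, 0 < C ∧
      ∀ t : ℝ, 2 ≤ t → |x l t| ≤ C * Real.log t ^ ((l : ℕ) + 1) := by
  intro l
  -- basic facts
  have hSne : SΔ ≠ 0 := by
    intro h
    have h1 := hupper l
    rw [h, zero_mul] at h1
    linarith
  have hS2 : 0 < SΔ ^ 2 := by positivity
  set z : Fin L := ⟨0, l.pos⟩ with hzdef
  have hz_le : ∀ k : Fin L, z ≤ k := by
    intro k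
    rw [Fin.le_def]
    exact Nat.zero_le _
  have hstep_nonneg : ∀ u : ℝ, 0 ≤ stepSize SΔ u := by
    intro u
    apply Real.log_nonneg
    nlinarith [Real.exp_pos (SΔ * u)]
  -- the growth factor G
  set G : Fin L → ℝ → ℝ := fun k t => μ * ∑ j ∈ Finset.Iic k,
    x j t ^ 2 * stepSize SΔ (x j t) *
      Real.exp (-a * ∑ m ∈ Finset.Ioc j k, stepSize SΔ (x m t)) with hGdef
  have hG : ∀ (k : Fin L) (t : ℝ), 0 ≤ t → HasDerivAt (x k) (x k t * G k t) t := by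
    intro k t ht
    have h := hode k t ht
    have heq : ∑ j ∈ Finset.Iic k, hiddenAttn μ SΔ a x k j t * x j t = x k t * G k t := by
      rw [hGdef]
      simp only
      rw [Finset.mul_sum, Finset.mul_sum]
      refine Finset.sum_congr rfl fun j hj => ?_
      unfold hiddenAttn
      by_cases hkj : k = j
      · subst hkj
        rw [if_pos rfl, Finset.Ioc_self, Finset.sum_empty, mul_zero, Real.exp_zero]
        ring
      · rw [if_neg hkj]
        ring
    rw [← heq]
    exact h
  have hGnn : ∀ (k : Fin L) (t : ℝ), 0 ≤ G k t := by
    intro k t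
    rw [hGdef]
    simp only
    apply mul_nonneg hμ.le
    apply Finset.sum_nonneg
    intro j hj
    exact mul_nonneg (mul_nonneg (sq_nonneg _) (hstep_nonneg _)) (Real.exp_nonneg _)
  -- derivative of squares
  have hsqD : ∀ (k : Fin L) (t : ℝ), 0 ≤ t →
      HasDerivAt (fun s => x k s ^ 2) (2 * x k t * (x k t * G k t)) t := by
    intro k t ht
    have h := (hG k t ht).pow 2
    exact h.congr_deriv (by rw [show (2:ℕ) - 1 = 1 from rfl, pow_one, Nat.cast_ofNat])
  -- squares are monotone on [0, ∞)
  have hsqmono : ∀ k : Fin L, MonotoneOn (fun t => x k t ^ 2) (Ici (0:ℝ)) := by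
    intro k
    apply monoOn_hasDeriv (convex_Ici 0) (f' := fun t => 2 * x k t * (x k t * G k t))
    · intro t ht
      exact hsqD k t ht
    · intro t ht
      rw [interior_Ici] at ht
      have h1 : 2 * x k t * (x k t * G k t) = 2 * (x k t * x k t) * G k t := by ring
      rw [h1]
      exact mul_nonneg (mul_nonneg (by norm_num) (mul_self_nonneg _)) (hGnn k t)
  have hx0sq : ∀ k : Fin L, 0 < x k 0 ^ 2 := by
    intro k
    have h := hupper k
    have hne : x k 0 ≠ 0 := by
      intro h0
      rw [h0, mul_zero] at h
      linarith
    positivity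
  have hsqpos : ∀ (k : Fin L) (t : ℝ), 0 ≤ t → 0 < x k t ^ 2 := by
    intro k t ht
    have h1 : x k 0 ^ 2 ≤ x k t ^ 2 := hsqmono k self_mem_Ici ht ht
    have := hx0sq k
    linarith
  have hxne : ∀ (k : Fin L) (t : ℝ), 0 ≤ t → x k t ≠ 0 := by
    intro k t ht h0
    have := hsqpos k t ht
    rw [h0] at this
    norm_num at this
  have hxcont : ∀ k : Fin L, ContinuousOn (x k) (Ici (0:ℝ)) :=
    fun k t ht => (hG k t ht).continuousAt.continuousWithinAt
  -- u = SΔ x stays negative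
  have huneg : ∀ (k : Fin L) (t : ℝ), 0 ≤ t → SΔ * x k t < 0 := by
    intro k t ht
    by_contra hge
    push_neg at hge
    have hc : ContinuousOn (fun s => SΔ * x k s) (Icc 0 t) :=
      continuousOn_const.mul ((hxcont k).mono Icc_subset_Ici_self)
    have h0 : SΔ * x k 0 < 0 := lt_of_le_of_lt (hupper k) (by linarith)
    have h0mem : (0:ℝ) ∈ Icc (SΔ * x k 0) (SΔ * x k t) := ⟨h0.le, hge⟩
    obtain ⟨s, hs, hs0⟩ := intermediate_value_Icc ht hc h0mem
    have hxs : x k s = 0 := by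
      rcases mul_eq_zero.mp hs0 with h | h
      · exact absurd h hSne
      · exact h
    exact hxne k s hs.1 hxs
  -- u stays below -r₀
  have hur : ∀ (k : Fin L) (t : ℝ), 0 ≤ t → SΔ * x k t ≤ -r₀ := by
    intro k t ht
    have hm : x k 0 ^ 2 ≤ x k t ^ 2 := hsqmono k self_mem_Ici ht ht
    have h1 : (SΔ * x k 0) ^ 2 ≤ (SΔ * x k t) ^ 2 := by nlinarith [sq_nonneg SΔ]
    have h2 := hupper k
    have h3 := huneg k t ht
    have h4 : r₀ ^ 2 ≤ (SΔ * x k 0) ^ 2 := by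
      nlinarith [mul_nonneg (by linarith : (0:ℝ) ≤ -r₀ - SΔ * x k 0)
        (by linarith : (0:ℝ) ≤ r₀ - SΔ * x k 0)]
    by_contra hgt
    push_neg at hgt
    nlinarith [mul_pos (by linarith : (0:ℝ) < SΔ * x k t + r₀)
      (by linarith : (0:ℝ) < r₀ - SΔ * x k t)]
  -- the function f(r) = r² ln(1+e^{-r}) and its antitonicity on [r₀, ∞)
  set fφ : ℝ → ℝ := fun r => r ^ 2 * Real.log (1 + Real.exp (-r)) with hfφdef
  have hfderiv : ∀ r : ℝ, HasDerivAt fφ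
      (r * (2 * Real.log (1 + Real.exp (-r)) - r * Real.exp (-r) / (1 + Real.exp (-r)))) r := by
    intro r
    have hpos : (0:ℝ) < 1 + Real.exp (-r) := by positivity
    have h1 : HasDerivAt (fun s : ℝ => 1 + Real.exp (-s)) (-Real.exp (-r)) r := by
      have := ((Real.hasDerivAt_exp (-r)).comp r (hasDerivAt_neg r)).const_add 1
      exact this.congr_deriv (by ring)
    have h2 : HasDerivAt (fun s : ℝ => Real.log (1 + Real.exp (-s)))
        (-Real.exp (-r) / (1 + Real.exp (-r))) r := h1.log hpos.ne'
    have h3 : HasDerivAt (fun s : ℝ => s ^ 2) (2 * r) r := by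
      simpa using hasDerivAt_pow 2 r
    have h4 := h3.mul h2
    rw [hfφdef]
    exact h4.congr_deriv (by ring)
  have hfanti : AntitoneOn fφ (Ici r₀) := by
    apply antiOn_hasDeriv (convex_Ici r₀)
      (f' := fun r => r * (2 * Real.log (1 + Real.exp (-r)) - r * Real.exp (-r) / (1 + Real.exp (-r))))
      (fun r _ => hfderiv r)
    intro r hr
    rw [interior_Ici] at hr
    have hrpos : 0 < r := lt_trans hr₀ hr
    have hfun_le : 2 * Real.log (1 + Real.exp (-r)) - r * Real.exp (-r) / (1 + Real.exp (-r)) ≤ 0 := by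
      by_contra hgt
      push_neg at hgt
      -- continuous function hh
      have hcont : Continuous (fun s : ℝ => 2 * Real.log (1 + Real.exp (-s)) -
          s * Real.exp (-s) / (1 + Real.exp (-s))) := by
        have he : Continuous fun s : ℝ => 1 + Real.exp (-s) :=
          continuous_const.add (Real.continuous_exp.comp continuous_neg)
        have hne : ∀ s : ℝ, 1 + Real.exp (-s) ≠ 0 := fun s => by positivity
        exact (continuous_const.mul (he.log hne)).sub
          ((continuous_id.mul (Real.continuous_exp.comp continuous_neg)).div he hne)
      have hlarge : 2 * Real.log (1 + Real.exp (-(r+5))) -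
          (r+5) * Real.exp (-(r+5)) / (1 + Real.exp (-(r+5))) < 0 := by
        set R := r + 5 with hR
        have hR5 : (5:ℝ) ≤ R := by rw [hR]; linarith
        have hE : 0 < Real.exp (-R) := Real.exp_pos _
        have hlog : Real.log (1 + Real.exp (-R)) ≤ Real.exp (-R) := by
          have := Real.log_le_sub_one_of_pos (show (0:ℝ) < 1 + Real.exp (-R) by positivity)
          linarith
        have hEle : Real.exp (-R) ≤ 1 := Real.exp_le_one_iff.mpr (by linarith)
        have hge : R * Real.exp (-R) / 2 ≤ R * Real.exp (-R) / (1 + Real.exp (-R)) := by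
          apply div_le_div_of_nonneg_left (by positivity) (by positivity) (by linarith)
        nlinarith
      have hIVT := intermediate_value_Icc' (by linarith : r ≤ r + 5) hcont.continuousOn
      have h0mem : (0:ℝ) ∈ Icc (2 * Real.log (1 + Real.exp (-(r+5))) -
          (r+5) * Real.exp (-(r+5)) / (1 + Real.exp (-(r+5))))
          (2 * Real.log (1 + Real.exp (-r)) - r * Real.exp (-r) / (1 + Real.exp (-r))) :=
        ⟨hlarge.le, hgt.le⟩
      obtain ⟨c, hc, hc0⟩ := hIVT h0mem
      have hr' : r₀ < r := hr
      have hcr := huniq c (by linarith [hc.1] : 0 < c) (by simpa using hc0)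
      have := hc.1
      rw [hcr] at this
      linarith
    have : r * (2 * Real.log (1 + Real.exp (-r)) - r * Real.exp (-r) / (1 + Real.exp (-r))) ≤ 0 :=
      mul_nonpos_of_nonneg_of_nonpos hrpos.le hfun_le
    exact this
  -- G at the bottom token
  have hIicz : Finset.Iic z = {z} := by
    ext j
    simp only [Finset.mem_Iic, Finset.mem_singleton]
    constructor
    · intro hj
      exact le_antisymm hj (hz_le j)
    · rintro rfl
      exact le_refl _
  have hGz : ∀ t : ℝ, G z t = μ * (x z t ^ 2 * stepSize SΔ (x z t)) := by
    intro t
    rw [hGdef]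
    simp only
    rw [hIicz, Finset.sum_singleton, Finset.Ioc_self, Finset.sum_empty, mul_zero,
      Real.exp_zero, mul_one]
  have hdiag_le : ∀ (k : Fin L) (t : ℝ), μ * (x k t ^ 2 * stepSize SΔ (x k t)) ≤ G k t := by
    intro k t
    rw [hGdef]
    simp only
    have hmem : k ∈ Finset.Iic k := Finset.mem_Iic.mpr le_rfl
    have h := Finset.single_le_sum (s := Finset.Iic k)
      (f := fun j => x j t ^ 2 * stepSize SΔ (x j t) *
        Real.exp (-a * ∑ m ∈ Finset.Ioc j k, stepSize SΔ (x m t)))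
      (fun j _ => mul_nonneg (mul_nonneg (sq_nonneg _) (hstep_nonneg _))
        (Real.exp_nonneg _)) hmem
    simp only [Finset.Ioc_self, Finset.sum_empty, mul_zero, Real.exp_zero, mul_one] at h
    exact mul_le_mul_of_nonneg_left h hμ.le
  -- link to fφ
  have hterm_f : ∀ (k : Fin L) (t : ℝ),
      x k t ^ 2 * stepSize SΔ (x k t) = fφ (-(SΔ * x k t)) / SΔ ^ 2 := by
    intro k t
    rw [hfφdef]
    simp only [stepSize, neg_neg]
    field_simp
  -- order preservation against the bottom token
  have hord : ∀ (k : Fin L) (t : ℝ), 0 ≤ t → SΔ * x k t ≤ SΔ * x z t := by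
    intro k t₁ ht₁
    by_contra hpos0
    push_neg at hpos0
    set d : ℝ → ℝ := fun t => SΔ * x k t - SΔ * x z t with hddef
    have hd0 : d 0 ≤ 0 := by
      simp only [hddef]
      linarith [horder0 z k (hz_le k)]
    have hdt₁ : 0 < d t₁ := by
      simp only [hddef]
      linarith
    have hdderiv : ∀ t ∈ Ici (0:ℝ),
        HasDerivAt d (SΔ * (x k t * G k t) - SΔ * (x z t * G z t)) t :=
      fun t ht => ((hG k t ht).const_mul SΔ).sub ((hG z t ht).const_mul SΔ)
    -- continuity of G
    have hstepc : ∀ j : Fin L, ContinuousOn (fun t => stepSize SΔ (x j t)) (Ici (0:ℝ)) := by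
      intro j
      apply ContinuousOn.log
      · exact continuousOn_const.add
          (Real.continuous_exp.comp_continuousOn (continuousOn_const.mul (hxcont j)))
      · intro s hs
        positivity
    have hGcont : ContinuousOn (G k) (Ici (0:ℝ)) := by
      rw [hGdef]
      simp only
      apply continuousOn_const.mul
      apply continuousOn_finset_sum
      intro j hj
      exact (((hxcont j).pow 2).mul (hstepc j)).mul
        (Real.continuous_exp.comp_continuousOn
          (continuousOn_const.mul (continuousOn_finset_sum _ fun m _ => hstepc m)))
    obtain ⟨K, hK⟩ := (isCompact_Icc : IsCompact (Icc (0:ℝ) t₁)).exists_bound_of_continuousOn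
      (hGcont.mono Icc_subset_Ici_self)
    -- key differential inequality where d ≥ 0
    have hkey : ∀ t : ℝ, 0 ≤ t → 0 ≤ d t →
        SΔ * (x k t * G k t) - SΔ * (x z t * G z t) ≤ G k t * d t := by
      intro t ht hdnn
      have huk := hur k t ht
      have huz := hur z t ht
      have hzneg := huneg z t ht
      have hdval : SΔ * x z t ≤ SΔ * x k t := by
        simp only [hddef] at hdnn
        linarith
      have hle : G z t ≤ G k t := by
        have h1 : fφ (-(SΔ * x z t)) ≤ fφ (-(SΔ * x k t)) := by
          apply hfanti _ _ (by linarith : -(SΔ * x k t) ≤ -(SΔ * x z t))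
          · rw [mem_Ici]; linarith
          · rw [mem_Ici]; linarith
        calc G z t = μ * (x z t ^ 2 * stepSize SΔ (x z t)) := hGz t
          _ = μ * (fφ (-(SΔ * x z t)) / SΔ ^ 2) := by rw [hterm_f]
          _ ≤ μ * (fφ (-(SΔ * x k t)) / SΔ ^ 2) := by
              apply mul_le_mul_of_nonneg_left _ hμ.le
              exact div_le_div_of_nonneg_right h1 hS2.le
          _ = μ * (x k t ^ 2 * stepSize SΔ (x k t)) := by rw [hterm_f]
          _ ≤ G k t := hdiag_le k t
      have h2 : SΔ * x z t * (G k t - G z t) ≤ 0 :=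
        mul_nonpos_of_nonpos_of_nonneg hzneg.le (by linarith)
      have expand : SΔ * (x k t * G k t) - SΔ * (x z t * G z t) =
          G k t * d t + SΔ * x z t * (G k t - G z t) := by
        simp only [hddef]
        ring
      rw [expand]
      linarith
    -- crossing argument
    set S : Set ℝ := {s | s ∈ Icc 0 t₁ ∧ d s ≤ 0} with hSdef
    have hdcont : ContinuousOn d (Icc 0 t₁) := fun s hs =>
      ((hdderiv s hs.1).continuousAt.continuousWithinAt)
    have hSclosed : IsClosed S := by
      have hSeq : S = Icc 0 t₁ ∩ d ⁻¹' (Iic 0) := by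
        ext s
        simp [hSdef]
      rw [hSeq]
      exact hdcont.preimage_isClosed_of_isClosed isClosed_Icc isClosed_Iic
    have hScpt : IsCompact S := isCompact_Icc.of_isClosed_subset hSclosed (fun s hs => hs.1)
    have hSne' : S.Nonempty := ⟨0, ⟨le_refl 0, ht₁⟩, hd0⟩
    set t₀ := sSup S with ht₀def
    have ht₀S : t₀ ∈ S := hScpt.sSup_mem hSne'
    have ht₀0 : 0 ≤ t₀ := ht₀S.1.1
    have ht₀t₁ : t₀ ≤ t₁ := ht₀S.1.2
    have ht₀lt : t₀ < t₁ := by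
      rcases lt_or_eq_of_le ht₀t₁ with h | h
      · exact h
      · exfalso
        have := ht₀S.2
        rw [h] at this
        linarith
    have hbdd : BddAbove S := hScpt.bddAbove
    have hdpos : ∀ s : ℝ, t₀ < s → s ≤ t₁ → 0 < d s := by
      intro s hs1 hs2
      by_contra hle
      push_neg at hle
      have hmem : s ∈ S := ⟨⟨le_trans ht₀0 hs1.le, hs2⟩, hle⟩
      exact absurd (le_csSup hbdd hmem) (not_le.mpr hs1)
    set g : ℝ → ℝ := fun t => d t * Real.exp (-K * t) with hgdef
    have hganti : AntitoneOn g (Icc t₀ t₁) := by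
      apply antiOn_hasDeriv (convex_Icc t₀ t₁)
        (f' := fun t => (SΔ * (x k t * G k t) - SΔ * (x z t * G z t)) * Real.exp (-K * t) +
          d t * (-K * Real.exp (-K * t)))
      · intro t ht
        have h1 := hdderiv t (le_trans ht₀0 ht.1)
        have h2 : HasDerivAt (fun t => Real.exp (-K * t)) (-K * Real.exp (-K * t)) t := by
          have := (Real.hasDerivAt_exp (-K * t)).comp t ((hasDerivAt_id t).const_mul (-K))
          exact this.congr_deriv (by ring)
        exact h1.mul h2
      · intro t ht
        rw [interior_Icc] at ht
        have ht0 : 0 ≤ t := le_trans ht₀0 ht.1.le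
        have hdp : 0 < d t := hdpos t ht.1 ht.2.le
        have hKt : G k t ≤ K := by
          have h := hK t ⟨ht0, ht.2.le⟩
          rw [Real.norm_eq_abs] at h
          exact le_trans (le_abs_self _) h
        have h3 := hkey t ht0 hdp.le
        have hexp : 0 < Real.exp (-K * t) := Real.exp_pos _
        have h4 : SΔ * (x k t * G k t) - SΔ * (x z t * G z t) ≤ K * d t :=
          le_trans h3 (mul_le_mul_of_nonneg_right hKt hdp.le)
        calc (SΔ * (x k t * G k t) - SΔ * (x z t * G z t)) * Real.exp (-K * t) +
            d t * (-K * Real.exp (-K * t))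
            = ((SΔ * (x k t * G k t) - SΔ * (x z t * G z t)) - K * d t) * Real.exp (-K * t) := by
              ring
          _ ≤ 0 := mul_nonpos_of_nonpos_of_nonneg (by linarith) hexp.le
    have hgle : g t₁ ≤ g t₀ := hganti ⟨le_refl t₀, ht₀t₁⟩ ⟨ht₀t₁, le_refl t₁⟩ ht₀t₁
    have hA : 0 < d t₁ * Real.exp (-K * t₁) := mul_pos hdt₁ (Real.exp_pos _)
    have hB : d t₀ * Real.exp (-K * t₀) ≤ 0 :=
      mul_nonpos_of_nonpos_of_nonneg ht₀S.2 (Real.exp_pos _).le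
    simp only [hgdef] at hgle
    linarith
  -- Step 7: G l ≤ (l+1) G z
  have hstep1 : ∀ t : ℝ, 0 ≤ t → ∀ j : Fin L,
      x j t ^ 2 * stepSize SΔ (x j t) ≤ x z t ^ 2 * stepSize SΔ (x z t) := by
    intro t ht j
    rw [hterm_f, hterm_f]
    apply div_le_div_of_nonneg_right _ hS2.le
    apply hfanti
    · rw [mem_Ici]; linarith [hur z t ht]
    · rw [mem_Ici]; linarith [hur j t ht]
    · linarith [hord j t ht]
  have hGle : ∀ t : ℝ, 0 ≤ t → G l t ≤ ((l : ℕ) + 1 : ℝ) * G z t := by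
    intro t ht
    have hbound : ∀ j ∈ Finset.Iic l,
        x j t ^ 2 * stepSize SΔ (x j t) *
          Real.exp (-a * ∑ m ∈ Finset.Ioc j l, stepSize SΔ (x m t)) ≤
        x z t ^ 2 * stepSize SΔ (x z t) := by
      intro j _
      have hE : Real.exp (-a * ∑ m ∈ Finset.Ioc j l, stepSize SΔ (x m t)) ≤ 1 := by
        rw [Real.exp_le_one_iff]
        have hs : 0 ≤ ∑ m ∈ Finset.Ioc j l, stepSize SΔ (x m t) :=
          Finset.sum_nonneg fun m _ => hstep_nonneg _
        nlinarith
      calc x j t ^ 2 * stepSize SΔ (x j t) *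
            Real.exp (-a * ∑ m ∈ Finset.Ioc j l, stepSize SΔ (x m t))
          ≤ x j t ^ 2 * stepSize SΔ (x j t) * 1 :=
            mul_le_mul_of_nonneg_left hE (mul_nonneg (sq_nonneg _) (hstep_nonneg _))
        _ = x j t ^ 2 * stepSize SΔ (x j t) := by ring
        _ ≤ x z t ^ 2 * stepSize SΔ (x z t) := hstep1 t ht j
    have hsum := Finset.sum_le_card_nsmul (Finset.Iic l)
      (fun j => x j t ^ 2 * stepSize SΔ (x j t) *
        Real.exp (-a * ∑ m ∈ Finset.Ioc j l, stepSize SΔ (x m t)))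
      (x z t ^ 2 * stepSize SΔ (x z t)) hbound
    rw [Fin.card_Iic] at hsum
    have hGlb : G l t ≤ μ * (((l : ℕ) + 1) •
        (x z t ^ 2 * stepSize SΔ (x z t))) := by
      rw [hGdef]
      simp only
      exact mul_le_mul_of_nonneg_left hsum hμ.le
    rw [nsmul_eq_mul] at hGlb
    rw [hGz]
    push_cast at hGlb ⊢
    linarith
  -- Step 8: the comparison x_l² ≤ D (x_z²)^{l+1}
  have hlogD : ∀ (k : Fin L) (t : ℝ), 0 ≤ t →
      HasDerivAt (fun s => Real.log (x k s ^ 2)) (2 * G k t) t := by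
    intro k t ht
    have h := (hsqD k t ht).log (hsqpos k t ht).ne'
    convert h using 1
    rw [eq_div_iff (hsqpos k t ht).ne']
    ring
  have hψanti : AntitoneOn (fun t => Real.log (x l t ^ 2) -
      ((l : ℕ) + 1 : ℝ) * Real.log (x z t ^ 2)) (Ici (0:ℝ)) := by
    apply antiOn_hasDeriv (convex_Ici 0)
      (f' := fun t => 2 * G l t - ((l : ℕ) + 1 : ℝ) * (2 * G z t))
    · intro t ht
      exact (hlogD l t ht).sub ((hlogD z t ht).const_mul _)
    · intro t ht
      rw [interior_Ici] at ht
      have h1 := hGle t ht.le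
      have h2 := hGnn z t
      nlinarith
  have hcomp : ∀ t : ℝ, 0 ≤ t → x l t ^ 2 ≤
      (x l 0 ^ 2 / (x z 0 ^ 2) ^ ((l : ℕ) + 1)) * (x z t ^ 2) ^ ((l : ℕ) + 1) := by
    intro t ht
    have h := hψanti self_mem_Ici ht ht
    simp only [] at h
    have hp1 : 0 < x l t ^ 2 := hsqpos l t ht
    have hpz : 0 < x z t ^ 2 := hsqpos z t ht
    have hpz0 : 0 < x z 0 ^ 2 := hx0sq z
    have hpl0 : 0 < x l 0 ^ 2 := hx0sq l
    have hp2 : 0 < (x l 0 ^ 2 / (x z 0 ^ 2) ^ ((l : ℕ) + 1)) *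
        (x z t ^ 2) ^ ((l : ℕ) + 1) :=
      mul_pos (div_pos hpl0 (pow_pos hpz0 _)) (pow_pos hpz _)
    rw [← Real.log_le_log_iff hp1 hp2]
    rw [Real.log_mul (div_pos hpl0 (pow_pos hpz0 _)).ne' (pow_pos hpz _).ne',
      Real.log_div hpl0.ne' (pow_pos hpz0 _).ne']
    have e1 : Real.log ((x z 0 ^ 2) ^ ((l : ℕ) + 1)) =
        (((l : ℕ) : ℝ) + 1) * Real.log (x z 0 ^ 2) := by
      rw [Real.log_pow]
      push_cast [-Real.log_pow]
      ring
    have e2 : Real.log ((x z t ^ 2) ^ ((l : ℕ) + 1)) =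
        (((l : ℕ) : ℝ) + 1) * Real.log (x z t ^ 2) := by
      rw [Real.log_pow]
      push_cast [-Real.log_pow]
      ring
    rw [e1, e2]
    linarith
  -- Step 9: logarithmic growth of the bottom token
  set M : ℝ := μ / (2 * SΔ ^ 2) * (4096 / r₀) with hMdef
  have hMpos : 0 < M := by rw [hMdef]; positivity
  have hcube : ∀ s : ℝ, r₀ ≤ s → s ^ 3 * Real.exp (-s / 2) ≤ 4096 / s := by
    intro s hsr
    have hspos : 0 < s := lt_of_lt_of_le hr₀ hsr
    have h1 : s / 8 ≤ Real.exp (s / 8) := by linarith [Real.add_one_le_exp (s / 8)]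
    have h2 : (s / 8) ^ 4 ≤ Real.exp (s / 8) ^ 4 := pow_le_pow_left₀ (by positivity) h1 4
    have h3 : Real.exp (s / 8) ^ 4 = Real.exp (s / 2) := by
      rw [← Real.exp_nat_mul]
      congr 1
      push_cast
      ring
    have h4 : s ^ 4 / 4096 ≤ Real.exp (s / 2) := by
      rw [← h3]
      calc s ^ 4 / 4096 = (s / 8) ^ 4 := by ring
        _ ≤ _ := h2
    have h5 : Real.exp (-s / 2) ≤ 4096 / s ^ 4 := by
      rw [show -s / 2 = -(s / 2) by ring, Real.exp_neg]
      have h6 : 0 < s ^ 4 / 4096 := by positivity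
      calc (Real.exp (s / 2))⁻¹ ≤ (s ^ 4 / 4096)⁻¹ := inv_anti₀ h6 h4
        _ = 4096 / s ^ 4 := by field_simp
    calc s ^ 3 * Real.exp (-s / 2) ≤ s ^ 3 * (4096 / s ^ 4) :=
        mul_le_mul_of_nonneg_left h5 (by positivity)
      _ = 4096 / s := by field_simp
  have hwanti : AntitoneOn (fun t => Real.exp (-(SΔ * x z t) / 2) - M * t) (Ici (0:ℝ)) := by
    apply antiOn_hasDeriv (convex_Ici 0)
      (f' := fun t => Real.exp (-(SΔ * x z t) / 2) * (-(SΔ * (x z t * G z t)) / 2) - M)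
    · intro t ht
      have h1 : HasDerivAt (fun s => -(SΔ * x z s) / 2) (-(SΔ * (x z t * G z t)) / 2) t :=
        (((hG z t ht).const_mul SΔ).neg).div_const 2
      have h2 : HasDerivAt (fun s => Real.exp (-(SΔ * x z s) / 2))
          (Real.exp (-(SΔ * x z t) / 2) * (-(SΔ * (x z t * G z t)) / 2)) t :=
        (Real.hasDerivAt_exp _).comp t h1
      have h3 : HasDerivAt (fun s : ℝ => M * s) M t := by
        simpa using (hasDerivAt_id t).const_mul M
      exact h2.sub h3
    · intro t ht
      rw [interior_Ici] at ht
      have ht0 : (0:ℝ) ≤ t := ht.le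
      have hst : r₀ ≤ -(SΔ * x z t) := by linarith [hur z t ht0]
      have hstpos : 0 < -(SΔ * x z t) := lt_of_lt_of_le hr₀ hst
      have hlog : Real.log (1 + Real.exp (SΔ * x z t)) ≤ Real.exp (SΔ * x z t) := by
        linarith [Real.log_le_sub_one_of_pos
          (show (0:ℝ) < 1 + Real.exp (SΔ * x z t) by positivity)]
      have hGzb : G z t ≤ μ / SΔ ^ 2 * ((-(SΔ * x z t)) ^ 2 * Real.exp (SΔ * x z t)) := by
        rw [hGz]
        have hxz2 : x z t ^ 2 = (-(SΔ * x z t)) ^ 2 / SΔ ^ 2 := by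
          field_simp
        rw [hxz2]
        simp only [stepSize]
        calc μ * ((-(SΔ * x z t)) ^ 2 / SΔ ^ 2 * Real.log (1 + Real.exp (SΔ * x z t)))
            ≤ μ * ((-(SΔ * x z t)) ^ 2 / SΔ ^ 2 * Real.exp (SΔ * x z t)) := by
              apply mul_le_mul_of_nonneg_left _ hμ.le
              exact mul_le_mul_of_nonneg_left hlog (by positivity)
          _ = μ / SΔ ^ 2 * ((-(SΔ * x z t)) ^ 2 * Real.exp (SΔ * x z t)) := by ring
      set s0 : ℝ := -(SΔ * x z t) with hs0
      have hrw : -(SΔ * (x z t * G z t)) = s0 * G z t := by rw [hs0]; ring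
      rw [hrw]
      have hexpid : Real.exp (SΔ * x z t) = Real.exp (-s0) := by rw [hs0, neg_neg]
      have c3 : s0 ^ 3 * Real.exp (-s0 / 2) ≤ 4096 / r₀ := by
        calc s0 ^ 3 * Real.exp (-s0 / 2) ≤ 4096 / s0 := hcube s0 hst
          _ ≤ 4096 / r₀ := div_le_div_of_nonneg_left (by norm_num) hr₀ hst
      have hchain : Real.exp (s0 / 2) * (s0 * G z t / 2) ≤ M := by
        have hprod : s0 * G z t ≤ s0 * (μ / SΔ ^ 2 * (s0 ^ 2 * Real.exp (SΔ * x z t))) :=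
          mul_le_mul_of_nonneg_left hGzb hstpos.le
        calc Real.exp (s0 / 2) * (s0 * G z t / 2)
            ≤ Real.exp (s0 / 2) *
              (s0 * (μ / SΔ ^ 2 * (s0 ^ 2 * Real.exp (SΔ * x z t))) / 2) := by
              apply mul_le_mul_of_nonneg_left _ (Real.exp_nonneg _)
              linarith
          _ = μ / (2 * SΔ ^ 2) * (s0 ^ 3 * Real.exp (-s0 / 2)) := by
              rw [hexpid, show -s0 / 2 = s0 / 2 + -s0 by ring, Real.exp_add]
              ring
          _ ≤ μ / (2 * SΔ ^ 2) * (4096 / r₀) :=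
              mul_le_mul_of_nonneg_left c3 (by positivity)
          _ = M := by rw [hMdef]
      linarith
  have hexpbound : ∀ t : ℝ, 0 ≤ t →
      Real.exp (-(SΔ * x z t) / 2) ≤ Real.exp (-(SΔ * x z 0) / 2) + M * t := by
    intro t ht
    have h := hwanti self_mem_Ici ht ht
    simp only [] at h
    linarith
  set B : ℝ := Real.exp (-(SΔ * x z 0) / 2) + M with hBdef
  have hB1 : 1 ≤ B := by
    have h1 : 0 ≤ -(SΔ * x z 0) / 2 := by linarith [hupper z]
    have h2 := Real.one_le_exp h1
    rw [hBdef]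
    linarith
  have hlog2pos : 0 < Real.log 2 := Real.log_pos (by norm_num)
  set C₀ : ℝ := 2 * Real.log B / Real.log 2 + 2 with hC₀def
  have hlogB : 0 ≤ Real.log B := Real.log_nonneg hB1
  have hC₀pos : 0 < C₀ := by
    rw [hC₀def]
    positivity
  have hzbound : ∀ t : ℝ, 2 ≤ t → -(SΔ * x z t) ≤ C₀ * Real.log t := by
    intro t ht2
    have ht0 : (0:ℝ) ≤ t := by linarith
    have ht1 : (1:ℝ) ≤ t := by linarith
    have hlogt : Real.log 2 ≤ Real.log t := Real.log_le_log (by norm_num) ht2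
    have h1 : Real.exp (-(SΔ * x z t) / 2) ≤ B * t := by
      have h2 := hexpbound t ht0
      have h3 : Real.exp (-(SΔ * x z 0) / 2) ≤ Real.exp (-(SΔ * x z 0) / 2) * t := by
        nlinarith [Real.exp_pos (-(SΔ * x z 0) / 2)]
      rw [hBdef]
      nlinarith [hMpos.le]
    have hBt : 0 < B * t := by nlinarith
    have h2 : -(SΔ * x z t) / 2 ≤ Real.log (B * t) := (Real.le_log_iff_exp_le hBt).mpr h1
    rw [Real.log_mul (by linarith) (by linarith)] at h2
    have h4 : 2 * Real.log B ≤ 2 * Real.log B / Real.log 2 * Real.log t := by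
      calc 2 * Real.log B = 2 * Real.log B / Real.log 2 * Real.log 2 := by field_simp
        _ ≤ 2 * Real.log B / Real.log 2 * Real.log t :=
          mul_le_mul_of_nonneg_left hlogt (by positivity)
    rw [hC₀def]
    nlinarith
  -- Step 10: conclusion
  have hxzsq : ∀ t : ℝ, 2 ≤ t → x z t ^ 2 ≤ C₀ ^ 2 / SΔ ^ 2 * Real.log t ^ 2 := by
    intro t ht2
    have ht0 : (0:ℝ) ≤ t := by linarith
    have h1 := hzbound t ht2
    have h2 : 0 < -(SΔ * x z t) := lt_of_lt_of_le hr₀ (by linarith [hur z t ht0])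
    have h3 : (SΔ * x z t) ^ 2 ≤ C₀ ^ 2 * Real.log t ^ 2 := by nlinarith
    have h4 : x z t ^ 2 = (SΔ * x z t) ^ 2 / SΔ ^ 2 := by
      field_simp
    rw [h4]
    calc (SΔ * x z t) ^ 2 / SΔ ^ 2 ≤ C₀ ^ 2 * Real.log t ^ 2 / SΔ ^ 2 :=
        div_le_div_of_nonneg_right h3 hS2.le
      _ = C₀ ^ 2 / SΔ ^ 2 * Real.log t ^ 2 := by ring
  set n : ℕ := (l : ℕ) + 1 with hndef
  set D : ℝ := x l 0 ^ 2 / (x z 0 ^ 2) ^ n with hDdef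
  have hDpos : 0 < D := by
    rw [hDdef]
    exact div_pos (hx0sq l) (pow_pos (hx0sq z) n)
  have hApos : 0 < C₀ ^ 2 / SΔ ^ 2 := div_pos (pow_pos hC₀pos 2) hS2
  set C : ℝ := Real.sqrt (D * (C₀ ^ 2 / SΔ ^ 2) ^ n) with hCdef
  have hCpos : 0 < C := by
    rw [hCdef]
    exact Real.sqrt_pos.mpr (mul_pos hDpos (pow_pos hApos n))
  refine ⟨C, hCpos, ?_⟩
  intro t ht2
  have ht0 : (0:ℝ) ≤ t := by linarith
  have hlogt : 0 < Real.log t :=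
    lt_of_lt_of_le hlog2pos (Real.log_le_log (by norm_num) ht2)
  have h1 := hcomp t ht0
  have h2 : (x z t ^ 2) ^ n ≤ (C₀ ^ 2 / SΔ ^ 2 * Real.log t ^ 2) ^ n :=
    pow_le_pow_left₀ (sq_nonneg _) (hxzsq t ht2) n
  have h3 : x l t ^ 2 ≤ D * (C₀ ^ 2 / SΔ ^ 2 * Real.log t ^ 2) ^ n := by
    calc x l t ^ 2 ≤ D * (x z t ^ 2) ^ n := h1
      _ ≤ D * (C₀ ^ 2 / SΔ ^ 2 * Real.log t ^ 2) ^ n :=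
        mul_le_mul_of_nonneg_left h2 hDpos.le
  have h4 : D * (C₀ ^ 2 / SΔ ^ 2 * Real.log t ^ 2) ^ n = (C * Real.log t ^ n) ^ 2 := by
    have h5 : (C₀ ^ 2 / SΔ ^ 2 * Real.log t ^ 2) ^ n =
        (C₀ ^ 2 / SΔ ^ 2) ^ n * (Real.log t ^ n) ^ 2 := by
      rw [mul_pow, ← pow_mul, ← pow_mul, Nat.mul_comm]
    rw [h5, hCdef, mul_pow, Real.sq_sqrt (mul_pos hDpos (pow_pos hApos n)).le]
    ring
  calc |x l t| = Real.sqrt (x l t ^ 2) := (Real.sqrt_sq_eq_abs _).symm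
    _ ≤ Real.sqrt ((C * Real.log t ^ n) ^ 2) := Real.sqrt_le_sqrt (by rw [← h4]; exact h3)
    _ = |C * Real.log t ^ n| := Real.sqrt_sq_eq_abs _
    _ = C * Real.log t ^ n := abs_of_nonneg (by positivity)
end

section
/- Under the slow-divergence assumptions (μ = S_C^⊤S_B > 0 and S_Δ x_{L0} ≤ … ≤ S_Δ x_{10} ≤ −r₀), all hidden attention scores converge to zero: lim_{t→∞} P_{lj}(t) = 0 for all L ≥ l ≥ j ≥ 1. -/
open Real Filter Set

noncomputable def dlt (r : ℝ) : ℝ := Real.log (1 + Real.exp (-r))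

lemma one_lt_arg (r : ℝ) : 1 < 1 + Real.exp (-r) := by
  have := Real.exp_pos (-r); linarith

lemma dlt_nonneg (r : ℝ) : 0 ≤ dlt r := Real.log_nonneg (one_lt_arg r).le

lemma dlt_pos (r : ℝ) : 0 < dlt r := Real.log_pos (one_lt_arg r)

lemma dlt_le_exp (r : ℝ) : dlt r ≤ Real.exp (-r) := by
  have h := Real.log_le_sub_one_of_pos (x := 1 + Real.exp (-r)) (by have := Real.exp_pos (-r); linarith)
  simpa [dlt] using h

lemma dlt_anti : Antitone dlt := by
  intro r s hrs
  have : Real.exp (-s) ≤ Real.exp (-r) := Real.exp_le_exp.2 (by linarith)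
  exact Real.log_le_log (by have := Real.exp_pos (-s); linarith) (by linarith)

lemma dlt_continuous : Continuous dlt := by
  have h1 : Continuous fun r : ℝ => 1 + Real.exp (-r) := by continuity
  exact h1.log (fun r => by have := one_lt_arg r; linarith)

lemma dlt_hasDerivAt (r : ℝ) :
    HasDerivAt dlt (-(Real.exp (-r) / (1 + Real.exp (-r)))) r := by
  have h1 : HasDerivAt (fun r : ℝ => 1 + Real.exp (-r)) (-Real.exp (-r)) r := by
    simpa using (((hasDerivAt_id r).neg).exp.const_add 1)
  have h2 := h1.log (by have := one_lt_arg r; linarith)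
  show HasDerivAt (fun r => Real.log (1 + Real.exp (-r))) _ r
  simpa [neg_div] using h2

noncomputable def Hfun (r : ℝ) : ℝ := 2 * dlt r - r * Real.exp (-r) / (1 + Real.exp (-r))

lemma Hfun_cont : Continuous Hfun := by
  have h1 : Continuous fun r : ℝ => 1 + Real.exp (-r) := by continuity
  exact (continuous_const.mul dlt_continuous).sub
    ((continuous_id.mul (Real.continuous_exp.comp continuous_neg)).div h1
      (fun r => by have := one_lt_arg r; linarith))

lemma Hfun_neg_of_ge_five (s : ℝ) (hs : 5 ≤ s) : Hfun s < 0 := by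
  have he := Real.exp_pos (-s)
  have h1 : dlt s ≤ Real.exp (-s) := dlt_le_exp s
  have h2 : 1 + Real.exp (-s) ≤ 2 := by
    have : Real.exp (-s) ≤ 1 := Real.exp_le_one_iff.2 (by linarith)
    linarith
  have h3 : (5 : ℝ) * Real.exp (-s) / 2 ≤ s * Real.exp (-s) / (1 + Real.exp (-s)) := by
    apply div_le_div₀ (by positivity) (by nlinarith) (by linarith) h2
  have : Hfun s ≤ 2 * Real.exp (-s) - 5 * Real.exp (-s) / 2 := by
    unfold Hfun; linarith
  nlinarith

lemma Hfun_nonpos (r₀ : ℝ) (hr₀ : 0 < r₀) (hroot : Hfun r₀ = 0)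
    (huniq : ∀ r : ℝ, 0 < r → Hfun r = 0 → r = r₀) :
    ∀ s, r₀ ≤ s → Hfun s ≤ 0 := by
  intro s hs
  rcases eq_or_lt_of_le hs with h | h
  · rw [← h]; exact hroot.le
  by_contra hpos
  push_neg at hpos
  have hs5 : s < 5 := by
    by_contra h5; push_neg at h5
    exact absurd (Hfun_neg_of_ge_five s h5) (by linarith)
  have h5 : Hfun 5 < 0 := Hfun_neg_of_ge_five 5 le_rfl
  obtain ⟨c, hc, hc0⟩ := intermediate_value_Icc' hs5.le Hfun_cont.continuousOn
    (by constructor <;> [linarith; linarith] : (0:ℝ) ∈ Icc (Hfun 5) (Hfun s))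
  have : c = r₀ := huniq c (by have := hc.1; linarith) hc0
  have := hc.1
  linarith

noncomputable def Ffun (r : ℝ) : ℝ := r ^ 2 * dlt r

lemma Ffun_hasDerivAt (r : ℝ) : HasDerivAt Ffun (r * Hfun r) r := by
  have h := (hasDerivAt_pow 2 r).mul (dlt_hasDerivAt r)
  refine h.congr_deriv ?_
  unfold Hfun dlt
  have := one_lt_arg r
  field_simp
  ring

lemma Ffun_anti (r₀ : ℝ) (hr₀ : 0 < r₀) (hroot : Hfun r₀ = 0)
    (huniq : ∀ r : ℝ, 0 < r → Hfun r = 0 → r = r₀) :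
    AntitoneOn Ffun (Ici r₀) := by
  apply antitoneOn_of_deriv_nonpos (convex_Ici r₀)
  · exact fun t _ => ((Ffun_hasDerivAt t).continuousAt).continuousWithinAt
  · exact fun t _ => ((Ffun_hasDerivAt t).differentiableAt).differentiableWithinAt
  · intro t ht
    rw [interior_Ici] at ht
    rw [(Ffun_hasDerivAt t).deriv]
    have h1 : Hfun t ≤ 0 := Hfun_nonpos r₀ hr₀ hroot huniq t ht.le
    have h2 : 0 ≤ t := by have : r₀ < t := ht; linarith
    exact mul_nonpos_of_nonneg_of_nonpos h2 h1

lemma exp_rep {f g : ℝ → ℝ} (hg : Continuous g)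
    (hf : ∀ t, 0 ≤ t → HasDerivAt f (f t * g t) t) :
    ∀ t, 0 ≤ t → f t = f 0 * Real.exp (∫ s in (0:ℝ)..t, g s) := by
  set u : ℝ → ℝ := fun t => ∫ s in (0:ℝ)..t, g s with hu_def
  have hu : ∀ t, HasDerivAt u (g t) t := fun t =>
    intervalIntegral.integral_hasDerivAt_right (hg.intervalIntegrable 0 t)
      (hg.stronglyMeasurableAtFilter _ _) hg.continuousAt
  set E : ℝ → ℝ := fun t => f t * Real.exp (-(u t)) with hE_def
  have hE : ∀ t, 0 ≤ t → HasDerivAt E 0 t := by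
    intro t ht
    have h := (hf t ht).mul ((hu t).neg.exp)
    refine h.congr_deriv ?_
    ring
  intro t ht
  have hconst : E t = E 0 := by
    have := constant_of_has_deriv_right_zero
      (f := E) (a := 0) (b := t)
      (fun s hs => ((hE s hs.1).continuousAt).continuousWithinAt)
      (fun s hs => (hE s hs.1).hasDerivWithinAt)
    exact this t ⟨ht, le_rfl⟩
  have hu0 : u 0 = 0 := intervalIntegral.integral_same
  have hE0 : E 0 = f 0 := by simp [hE_def, hu0]
  have hEt : f t * Real.exp (-(u t)) = f 0 := by rw [← hE0]; exact hconst
  have hexp := Real.exp_ne_zero (u t)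
  have : f t = f 0 * Real.exp (u t) := by
    rw [← hEt]; rw [Real.exp_neg]; field_simp
  exact this

lemma lt_iff_log {A B u v : ℝ} (hA : 0 < A) (hB : 0 < B) :
    A * Real.exp u < B * Real.exp v ↔ Real.log A + u < Real.log B + v := by
  constructor
  · intro h
    have := Real.log_lt_log (by positivity) h
    rwa [Real.log_mul hA.ne' (Real.exp_ne_zero _), Real.log_mul hB.ne' (Real.exp_ne_zero _),
      Real.log_exp, Real.log_exp] at this
  · intro h
    have := Real.exp_lt_exp.2 h
    rwa [Real.exp_add, Real.exp_add, Real.exp_log hA, Real.exp_log hB] at this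


/-- In the slow-divergence scenario (`μ > 0` and
`S_Δ·x_{L0} ≤ … ≤ S_Δ·x_{10} ≤ −r₀`, with `r₀` the unique positive root of
`h(r) = 2ln(1+e^{−r}) − re^{−r}/(1+e^{−r})`), all hidden attention scores converge
to zero: `P_{lj}(t) → 0` as `t → ∞`, for all `l ≥ j`. -/
theorem stmt17 (L : ℕ) (μ SΔ a r₀ : ℝ) (hμ : 0 < μ) (ha : 0 < a) (hr₀ : 0 < r₀)
    (hroot : 2 * Real.log (1 + Real.exp (-r₀)) -
      r₀ * Real.exp (-r₀) / (1 + Real.exp (-r₀)) = 0)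
    (huniq : ∀ r : ℝ, 0 < r →
      2 * Real.log (1 + Real.exp (-r)) -
        r * Real.exp (-r) / (1 + Real.exp (-r)) = 0 → r = r₀)
    (x : Fin L → ℝ → ℝ)
    (horder0 : ∀ j l : Fin L, j ≤ l → SΔ * x l 0 ≤ SΔ * x j 0)
    (hupper : ∀ l : Fin L, SΔ * x l 0 ≤ -r₀)
    (hode : ∀ (l : Fin L) (t : ℝ), 0 ≤ t →
      HasDerivAt (x l) (∑ j ∈ Finset.Iic l, hiddenAttn μ SΔ a x l j t * x j t) t) :
    ∀ l j : Fin L, j ≤ l →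
      Filter.Tendsto (fun t => hiddenAttn μ SΔ a x l j t) Filter.atTop (nhds 0) := by
  intro l j hjl
  have hL : 0 < L := l.pos
  set z : Fin L := ⟨0, hL⟩ with hz_def
  have hzle : ∀ i : Fin L, z ≤ i := by
    intro i; simp only [hz_def, Fin.le_def]; exact Nat.zero_le _
  have hSne : SΔ ≠ 0 := by
    intro h
    have := hupper l
    rw [h, zero_mul] at this
    linarith
  set c2 : ℝ := μ / SΔ ^ 2 with hc2_def
  have hc2 : 0 < c2 := by positivity
  set R : Fin L → ℝ → ℝ := fun i t => -(SΔ * x i t) with hR_def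
  have hroot' : Hfun r₀ = 0 := by simpa [Hfun, dlt] using hroot
  have huniq' : ∀ r : ℝ, 0 < r → Hfun r = 0 → r = r₀ := by
    intro r hrpos hr
    exact huniq r hrpos (by simpa [Hfun, dlt] using hr)
  have hFanti : AntitoneOn Ffun (Set.Ici r₀) := Ffun_anti r₀ hr₀ hroot' huniq'
  have hstep : ∀ (m : Fin L) (t : ℝ), stepSize SΔ (x m t) = dlt (R m t) := by
    intro m t; simp [stepSize, dlt, hR_def]
  have hR0 : ∀ i, r₀ ≤ R i 0 := by
    intro i; have := hupper i; simp only [hR_def]; linarith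
  have hR0z : ∀ i, R z 0 ≤ R i 0 := by
    intro i; have := horder0 z i (hzle i); simp only [hR_def]; linarith
  have hRpos0 : ∀ i, 0 < R i 0 := fun i => lt_of_lt_of_le hr₀ (hR0 i)
  have hRcontAt : ∀ (i : Fin L) (t : ℝ), 0 ≤ t → ContinuousAt (R i) t := by
    intro i t ht
    exact (continuousAt_const.mul (hode i t ht).continuousAt).neg
  set Y : Fin L → ℝ → ℝ := fun i t => R i (max t 0) with hY_def
  have hYeq : ∀ (i : Fin L) (t : ℝ), 0 ≤ t → Y i t = R i t := by
    intro i t ht; simp only [hY_def, max_eq_left ht]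
  have hYcont : ∀ i, Continuous (Y i) := by
    intro i
    have hmax : Continuous fun t : ℝ => max t 0 := continuous_id.max continuous_const
    have hRon : ContinuousOn (R i) (Set.Ici 0) := fun s hs =>
      (hRcontAt i s hs).continuousWithinAt
    rw [← continuousOn_univ]
    exact hRon.comp hmax.continuousOn (fun s _ => le_max_right s 0)
  set G : Fin L → ℝ → ℝ := fun i t => ∑ k ∈ Finset.Iic i,
      c2 * Ffun (Y k t) * Real.exp (-a * ∑ m ∈ Finset.Ioc k i, dlt (Y m t)) with hG_def
  have hGcont : ∀ i, Continuous (G i) := by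
    intro i
    apply continuous_finset_sum
    intro k _
    have h1 : Continuous fun t => Ffun (Y k t) := by
      have : Continuous Ffun := (continuous_pow 2).mul dlt_continuous
      exact this.comp (hYcont k)
    have h2 : Continuous fun t => Real.exp (-a * ∑ m ∈ Finset.Ioc k i, dlt (Y m t)) := by
      apply Real.continuous_exp.comp
      apply Continuous.mul continuous_const
      exact continuous_finset_sum _ (fun m _ => dlt_continuous.comp (hYcont m))
    exact (continuous_const.mul h1).mul h2
  have hFnn : ∀ r : ℝ, 0 ≤ Ffun r := fun r =>
    mul_nonneg (sq_nonneg r) (dlt_nonneg r)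
  have hGnn : ∀ i t, 0 ≤ G i t := by
    intro i t
    apply Finset.sum_nonneg
    intro k _
    exact mul_nonneg (mul_nonneg hc2.le (hFnn _)) (Real.exp_pos _).le
  have hGder : ∀ (i : Fin L) (t : ℝ), 0 ≤ t → HasDerivAt (R i) (R i t * G i t) t := by
    intro i t ht
    have h := (HasDerivAt.const_mul SΔ (hode i t ht)).neg
    have hY' : ∀ m : Fin L, Y m t = R m t := fun m => hYeq m t ht
    have heq : R i t * G i t = -(SΔ * ∑ k ∈ Finset.Iic i, hiddenAttn μ SΔ a x i k t * x k t) := by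
      rw [Finset.mul_sum (a := SΔ), ← Finset.sum_neg_distrib]
      simp only [hG_def, Finset.mul_sum]
      apply Finset.sum_congr rfl
      intro k _
      simp only [hY']
      by_cases hk : i = k
      · subst hk
        simp only [hiddenAttn, if_true, Finset.Ioc_self, Finset.sum_empty, Real.exp_zero,
          mul_one, hstep, Ffun, hR_def, hc2_def]
        field_simp
      · simp only [hiddenAttn, hstep, Ffun, hR_def, hc2_def, Finset.mul_sum]
        rw [if_neg hk]
        field_simp
    rw [heq]
    exact h
  set u : Fin L → ℝ → ℝ := fun i t => ∫ s in (0:ℝ)..t, G i s with hu_def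
  have hu_deriv : ∀ i t, HasDerivAt (u i) (G i t) t := by
    intro i t
    exact intervalIntegral.integral_hasDerivAt_right ((hGcont i).intervalIntegrable 0 t)
      ((hGcont i).stronglyMeasurableAtFilter _ _) (hGcont i).continuousAt
  have hu0 : ∀ i, u i 0 = 0 := fun i => intervalIntegral.integral_same
  have hu_mono : ∀ i, Monotone (u i) := by
    intro i
    apply monotone_of_deriv_nonneg (fun t => (hu_deriv i t).differentiableAt)
    intro t
    rw [(hu_deriv i t).deriv]
    exact hGnn i t
  have hrep : ∀ (i : Fin L) (t : ℝ), 0 ≤ t → R i t = R i 0 * Real.exp (u i t) :=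
    fun i => exp_rep (hGcont i) (hGder i)
  have hu_nonneg : ∀ i t, 0 ≤ t → 0 ≤ u i t := by
    intro i t ht
    have := hu_mono i ht
    rwa [hu0 i] at this
  have hRt : ∀ (i : Fin L) (t : ℝ), 0 ≤ t → R i 0 ≤ R i t := by
    intro i t ht
    rw [hrep i t ht]
    nlinarith [Real.one_le_exp (hu_nonneg i t ht), hRpos0 i]
  have hRr₀ : ∀ (i : Fin L) (t : ℝ), 0 ≤ t → r₀ ≤ R i t := fun i t ht =>
    le_trans (hR0 i) (hRt i t ht)
  have hRpos : ∀ (i : Fin L) (t : ℝ), 0 ≤ t → 0 < R i t := fun i t ht =>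
    lt_of_lt_of_le hr₀ (hRr₀ i t ht)
  have hRmono : ∀ (i : Fin L) (s t : ℝ), 0 ≤ s → s ≤ t → R i s ≤ R i t := by
    intro i s t hs hst
    rw [hrep i s hs, hrep i t (hs.trans hst)]
    exact mul_le_mul_of_nonneg_left (Real.exp_le_exp.2 (hu_mono i hst)) (hRpos0 i).le
  have hIicz : Finset.Iic z = {z} := by
    ext k
    simp only [Finset.mem_Iic, Finset.mem_singleton]
    exact ⟨fun h => le_antisymm h (hzle k), fun h => h ▸ le_rfl⟩
  have hGz : ∀ t, G z t = c2 * Ffun (Y z t) := by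
    intro t
    simp [hG_def, hIicz, Finset.Ioc_self]
  have hGdiag : ∀ i t, c2 * Ffun (Y i t) ≤ G i t := by
    intro i t
    have h := Finset.single_le_sum
      (f := fun k => c2 * Ffun (Y k t) * Real.exp (-a * ∑ m ∈ Finset.Ioc k i, dlt (Y m t)))
      (fun k _ => mul_nonneg (mul_nonneg hc2.le (hFnn _)) (Real.exp_pos _).le)
      (Finset.mem_Iic.2 (le_refl i))
    simp only [Finset.Ioc_self, Finset.sum_empty, mul_zero, Real.exp_zero, mul_one] at h
    simpa only [hG_def] using h
  -- comparison with bottom trajectory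
  have hcomp : ∀ (i : Fin L) (t : ℝ), 0 ≤ t → R z t ≤ R i t := by
    intro i
    by_contra hex
    push_neg at hex
    obtain ⟨T, hT0, hTlt⟩ := hex
    set D : ℝ → ℝ := fun s => u z s - u i s - Real.log (R i 0 / R z 0) with hD_def
    have hDder : ∀ s, HasDerivAt D (G z s - G i s) s := fun s =>
      ((hu_deriv z s).sub (hu_deriv i s)).sub_const _
    have hDcont : Continuous D := by
      have : Differentiable ℝ D := fun s => (hDder s).differentiableAt
      exact this.continuous
    have hD0 : D 0 ≤ 0 := by
      have hlog0 : 0 ≤ Real.log (R i 0 / R z 0) :=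
        Real.log_nonneg ((one_le_div (hRpos0 z)).2 (hR0z i))
      simp only [hD_def, hu0]
      linarith
    have hDiff : ∀ s, 0 ≤ s → (R i s < R z s ↔ 0 < D s) := by
      intro s hs
      rw [hrep i s hs, hrep z s hs, lt_iff_log (hRpos0 i) (hRpos0 z)]
      simp only [hD_def]
      rw [Real.log_div (hRpos0 i).ne' (hRpos0 z).ne']
      constructor <;> intro <;> linarith
    have hDT : 0 < D T := (hDiff T hT0).1 hTlt
    set Sset : Set ℝ := Set.Icc 0 T ∩ {s | D s ≤ 0} with hS_def
    have hne : (0 : ℝ) ∈ Sset := ⟨⟨le_rfl, hT0⟩, hD0⟩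
    have hbdd : BddAbove Sset := ⟨T, fun s hs => hs.1.2⟩
    have hclosed : IsClosed Sset :=
      isClosed_Icc.inter (isClosed_le hDcont continuous_const)
    set t₀ := sSup Sset with ht₀_def
    have ht₀mem : t₀ ∈ Sset := hclosed.csSup_mem ⟨0, hne⟩ hbdd
    have ht₀0 : 0 ≤ t₀ := ht₀mem.1.1
    have ht₀T : t₀ ≤ T := ht₀mem.1.2
    have hDt₀ : D t₀ ≤ 0 := ht₀mem.2
    have ht₀lt : t₀ < T := lt_of_le_of_ne ht₀T (by intro h; rw [h] at hDt₀; linarith)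
    have hposmid : ∀ s, t₀ < s → s ≤ T → 0 < D s := by
      intro s h1 h2
      by_contra hcon
      push_neg at hcon
      have hmem : s ∈ Sset := ⟨⟨le_trans ht₀0 h1.le, h2⟩, hcon⟩
      exact absurd (le_csSup hbdd hmem) (not_le.2 h1)
    have hanti : AntitoneOn D (Set.Icc t₀ T) := by
      apply antitoneOn_of_deriv_nonpos (convex_Icc _ _) hDcont.continuousOn
        (fun s _ => (hDder s).differentiableAt.differentiableWithinAt)
      intro s hs
      rw [interior_Icc] at hs
      rw [(hDder s).deriv]
      have hs0 : 0 ≤ s := le_trans ht₀0 hs.1.le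
      have hRs : R i s < R z s := (hDiff s hs0).2 (hposmid s hs.1 hs.2.le)
      have hF : Ffun (R z s) ≤ Ffun (R i s) :=
        hFanti (Set.mem_Ici.2 (hRr₀ i s hs0)) (Set.mem_Ici.2 (hRr₀ z s hs0)) hRs.le
      have h2 : c2 * Ffun (R i s) ≤ G i s := by
        have := hGdiag i s
        rwa [hYeq i s hs0] at this
      have h3 : G z s = c2 * Ffun (R z s) := by rw [hGz s, hYeq z s hs0]
      have h4 : c2 * Ffun (R z s) ≤ c2 * Ffun (R i s) :=
        mul_le_mul_of_nonneg_left hF hc2.le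
      linarith
    have hfin := hanti (Set.left_mem_Icc.2 ht₀T) (Set.right_mem_Icc.2 ht₀T) ht₀T
    linarith
  -- growth bound
  have hGle : ∀ (i : Fin L) (t : ℝ), 0 ≤ t → G i t ≤ (L : ℝ) * G z t := by
    intro i t ht
    have hGzt : G z t = c2 * Ffun (R z t) := by rw [hGz t, hYeq z t ht]
    have hterm : ∀ k ∈ Finset.Iic i,
        c2 * Ffun (Y k t) * Real.exp (-a * ∑ m ∈ Finset.Ioc k i, dlt (Y m t))
          ≤ c2 * Ffun (R z t) := by
      intro k _
      have hsum : 0 ≤ ∑ m ∈ Finset.Ioc k i, dlt (Y m t) :=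
        Finset.sum_nonneg fun m _ => dlt_nonneg _
      have h1 : Real.exp (-a * ∑ m ∈ Finset.Ioc k i, dlt (Y m t)) ≤ 1 := by
        rw [Real.exp_le_one_iff, neg_mul]
        exact neg_nonpos.2 (mul_nonneg ha.le hsum)
      have h2 : Ffun (Y k t) ≤ Ffun (R z t) := by
        rw [hYeq k t ht]
        exact hFanti (Set.mem_Ici.2 (hRr₀ z t ht)) (Set.mem_Ici.2 (hRr₀ k t ht)) (hcomp k t ht)
      calc c2 * Ffun (Y k t) * Real.exp (-a * ∑ m ∈ Finset.Ioc k i, dlt (Y m t))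
          ≤ c2 * Ffun (Y k t) * 1 :=
            mul_le_mul_of_nonneg_left h1 (mul_nonneg hc2.le (hFnn _))
        _ = c2 * Ffun (Y k t) := mul_one _
        _ ≤ c2 * Ffun (R z t) := mul_le_mul_of_nonneg_left h2 hc2.le
    have hcard : ((Finset.Iic i).card : ℝ) ≤ (L : ℝ) := by
      have h : (Finset.Iic i).card ≤ L := by
        simpa using Finset.card_le_univ (Finset.Iic i)
      exact_mod_cast h
    calc G i t ≤ ∑ _k ∈ Finset.Iic i, c2 * Ffun (R z t) := Finset.sum_le_sum hterm
      _ = ((Finset.Iic i).card : ℝ) * (c2 * Ffun (R z t)) := by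
          rw [Finset.sum_const, nsmul_eq_mul]
      _ ≤ (L : ℝ) * (c2 * Ffun (R z t)) :=
          mul_le_mul_of_nonneg_right hcard (mul_nonneg hc2.le (hFnn _))
      _ = (L : ℝ) * G z t := by rw [hGzt]
  have hu_le : ∀ (i : Fin L) (t : ℝ), 0 ≤ t → u i t ≤ (L : ℝ) * u z t := by
    intro i t ht
    have h1 : u i t ≤ ∫ s in (0:ℝ)..t, (L : ℝ) * G z s := by
      apply intervalIntegral.integral_mono_on ht ((hGcont i).intervalIntegrable 0 t)
        ((continuous_const.mul (hGcont z)).intervalIntegrable 0 t)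
      intro s hs
      exact hGle i s hs.1
    rwa [intervalIntegral.integral_const_mul] at h1
  -- divergence
  have hdiv : Filter.Tendsto (R z) Filter.atTop Filter.atTop := by
    rw [Filter.tendsto_atTop]
    intro M
    have hexist : ∃ T, 0 ≤ T ∧ M ≤ R z T := by
      by_contra hcon
      push_neg at hcon
      set M' : ℝ := max M (R z 0) with hM'_def
      have hub : ∀ T, 0 ≤ T → R z T ≤ M' := fun T hT =>
        le_trans (hcon T hT).le (le_max_left _ _)
      have hdltM' : 0 < dlt M' := dlt_pos M'
      set ε : ℝ := r₀ * (c2 * (r₀ ^ 2 * dlt M')) with hε_def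
      have hε : 0 < ε := by
        apply mul_pos hr₀ (mul_pos hc2 (mul_pos (by positivity) hdltM'))
      have hder : ∀ T, 0 ≤ T → ε ≤ R z T * G z T := by
        intro T hT
        have hGzT : G z T = c2 * ((R z T) ^ 2 * dlt (R z T)) := by
          rw [hGz T, hYeq z T hT, Ffun]
        have h1 : dlt M' ≤ dlt (R z T) := dlt_anti (hub T hT)
        have h2 : r₀ ^ 2 ≤ (R z T) ^ 2 := by nlinarith [hRr₀ z T hT]
        have h3 : r₀ ^ 2 * dlt M' ≤ (R z T) ^ 2 * dlt (R z T) :=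
          mul_le_mul h2 h1 (dlt_nonneg _) (by positivity)
        rw [hGzT]
        have h4 : c2 * (r₀ ^ 2 * dlt M') ≤ c2 * ((R z T) ^ 2 * dlt (R z T)) :=
          mul_le_mul_of_nonneg_left h3 hc2.le
        have h5 : 0 ≤ c2 * (r₀ ^ 2 * dlt M') := by
          apply mul_nonneg hc2.le (mul_nonneg (by positivity) (dlt_nonneg _))
        calc ε = r₀ * (c2 * (r₀ ^ 2 * dlt M')) := hε_def
          _ ≤ R z T * (c2 * ((R z T) ^ 2 * dlt (R z T))) :=
              mul_le_mul (hRr₀ z T hT) h4 h5 (hRpos z T hT).le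
      have hφmono : MonotoneOn (fun T => R z T - ε * T) (Set.Ici 0) := by
        apply monotoneOn_of_deriv_nonneg (convex_Ici 0)
        · intro s hs
          exact ((hRcontAt z s hs).sub
            ((continuous_const.mul continuous_id).continuousAt)).continuousWithinAt
        · intro s hs
          rw [interior_Ici] at hs
          have hlin : HasDerivAt (fun y : ℝ => ε * y) ε s := by
            simpa using (hasDerivAt_id s).const_mul ε
          exact ((hGder z s hs.le).sub hlin).differentiableAt.differentiableWithinAt
        · intro s hs
          rw [interior_Ici] at hs
          have hlin : HasDerivAt (fun y : ℝ => ε * y) ε s := by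
            simpa using (hasDerivAt_id s).const_mul ε
          rw [HasDerivAt.deriv (f := fun T => R z T - ε * T) ((hGder z s hs.le).sub hlin)]
          have := hder s hs.le
          linarith
      set T : ℝ := (M' - R z 0) / ε + 1 with hT_def
      have hM'0 : R z 0 ≤ M' := le_max_right _ _
      have hTpos : 0 ≤ T := by
        rw [hT_def]
        have hq : 0 ≤ (M' - R z 0) / ε := div_nonneg (by linarith) hε.le
        linarith
      have hmul : ε * T = M' - R z 0 + ε := by
        rw [hT_def]; field_simp
      have := hφmono (Set.mem_Ici.2 le_rfl) (Set.mem_Ici.2 hTpos) hTpos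
      have hRT := hub T hTpos
      simp only [mul_zero, sub_zero] at this
      -- R z 0 ≤ R z T - ε * T
      nlinarith
    obtain ⟨T₀, hT₀, hM⟩ := hexist
    filter_upwards [Filter.eventually_ge_atTop T₀] with t htt
    exact le_trans hM (hRmono z T₀ t hT₀ htt)
  -- final squeeze
  have hRz0 : 0 < R z 0 := hRpos0 z
  set C : ℝ := c2 * (R l 0 * R j 0) / (R z 0) ^ (2 * L) with hC_def
  have hAeq : ∀ t : ℝ, 0 ≤ t → ∃ E : ℝ, 0 < E ∧ E ≤ 1 ∧
      hiddenAttn μ SΔ a x l j t = c2 * (R l t * R j t) * dlt (R j t) * E := by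
    intro t ht
    by_cases hlj : l = j
    · subst hlj
      refine ⟨1, one_pos, le_rfl, ?_⟩
      simp only [hiddenAttn, if_true, hstep, hR_def, hc2_def]
      field_simp
    · refine ⟨Real.exp (-a * ∑ k ∈ Finset.Ioc j l, stepSize SΔ (x k t)), Real.exp_pos _, ?_, ?_⟩
      · rw [Real.exp_le_one_iff, neg_mul]
        apply neg_nonpos.2
        apply mul_nonneg ha.le
        apply Finset.sum_nonneg
        intro k _
        rw [hstep]
        exact dlt_nonneg _
      · simp only [hiddenAttn, hstep, hR_def, hc2_def]
        rw [if_neg hlj]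
        field_simp
  have hexpu : ∀ (i : Fin L) (t : ℝ), 0 ≤ t → R i t ≤ R i 0 * (R z t / R z 0) ^ L := by
    intro i t ht
    have h2 : Real.exp (u i t) ≤ Real.exp ((L : ℝ) * u z t) :=
      Real.exp_le_exp.2 (hu_le i t ht)
    have h3 : Real.exp ((L : ℝ) * u z t) = (Real.exp (u z t)) ^ L := Real.exp_nat_mul _ L
    have h4 : Real.exp (u z t) = R z t / R z 0 := by
      rw [hrep z t ht, mul_div_cancel_left₀ _ hRz0.ne']
    rw [hrep i t ht]
    apply mul_le_mul_of_nonneg_left _ (hRpos0 i).le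
    calc Real.exp (u i t) ≤ Real.exp ((L : ℝ) * u z t) := h2
      _ = (Real.exp (u z t)) ^ L := h3
      _ = (R z t / R z 0) ^ L := by rw [h4]
  have hBnd : ∀ t : ℝ, 0 ≤ t →
      hiddenAttn μ SΔ a x l j t ≤ C * ((R z t) ^ (2 * L) * Real.exp (-(R z t))) ∧
      0 ≤ hiddenAttn μ SΔ a x l j t := by
    intro t ht
    obtain ⟨E, hE0, hE1, hEeq⟩ := hAeq t ht
    have hRlt := hRpos l t ht
    have hRjt := hRpos j t ht
    have hdltpos := dlt_pos (R j t)
    have hbase : 0 ≤ c2 * (R l t * R j t) * dlt (R j t) := by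
      apply mul_nonneg (mul_nonneg hc2.le (mul_nonneg hRlt.le hRjt.le)) (dlt_nonneg _)
    constructor
    · have step1 : hiddenAttn μ SΔ a x l j t ≤ c2 * (R l t * R j t) * dlt (R j t) := by
        rw [hEeq]
        exact mul_le_of_le_one_right hbase hE1
      have step2 : dlt (R j t) ≤ Real.exp (-(R z t)) := by
        calc dlt (R j t) ≤ Real.exp (-(R j t)) := dlt_le_exp _
          _ ≤ Real.exp (-(R z t)) := Real.exp_le_exp.2 (neg_le_neg (hcomp j t ht))
      have step3 : R l t * R j t ≤ (R l 0 * R j 0) * (R z t / R z 0) ^ (2 * L) := by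
        have h1 := hexpu l t ht
        have h2 := hexpu j t ht
        have hq : (0:ℝ) < R z t / R z 0 := div_pos (hRpos z t ht) hRz0
        calc R l t * R j t
            ≤ (R l 0 * (R z t / R z 0) ^ L) * (R j 0 * (R z t / R z 0) ^ L) :=
              mul_le_mul h1 h2 hRjt.le (mul_nonneg (hRpos0 l).le (pow_nonneg hq.le L))
          _ = (R l 0 * R j 0) * (R z t / R z 0) ^ (2 * L) := by
              rw [two_mul, pow_add]; ring
      calc hiddenAttn μ SΔ a x l j t ≤ c2 * (R l t * R j t) * dlt (R j t) := step1
        _ ≤ c2 * ((R l 0 * R j 0) * (R z t / R z 0) ^ (2 * L)) * Real.exp (-(R z t)) := by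
            apply mul_le_mul (mul_le_mul_of_nonneg_left step3 hc2.le) step2 (dlt_nonneg _)
            have hq : (0:ℝ) < R z t / R z 0 := div_pos (hRpos z t ht) hRz0
            have := mul_pos (hRpos0 l) (hRpos0 j)
            positivity
        _ = C * ((R z t) ^ (2 * L) * Real.exp (-(R z t))) := by
            rw [hC_def, div_pow]
            field_simp
    · rw [hEeq]
      have := mul_pos (mul_pos (mul_pos hc2 (mul_pos hRlt hRjt)) hdltpos) hE0
      linarith
  have hBt : Filter.Tendsto (fun t => C * ((R z t) ^ (2 * L) * Real.exp (-(R z t))))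
      Filter.atTop (nhds 0) := by
    have h1 : Filter.Tendsto (fun r : ℝ => r ^ (2 * L) * Real.exp (-r))
        Filter.atTop (nhds 0) := Real.tendsto_pow_mul_exp_neg_atTop_nhds_zero (2 * L)
    have h2 := (h1.comp hdiv).const_mul C
    simpa using h2
  apply tendsto_of_tendsto_of_tendsto_of_le_of_le' tendsto_const_nhds hBt
  · filter_upwards [Filter.eventually_ge_atTop (0:ℝ)] with t ht
    exact (hBnd t ht).2
  · filter_upwards [Filter.eventually_ge_atTop (0:ℝ)] with t ht
    exact (hBnd t ht).1
end
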